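/- arXiv:1909.03266 — 7 statements merged into one kernel-verified Lean document; each statement's English description precedes it below -/
import Mathlib

section
/- Let H be an odd positive integer. For every real number α, ∑_{h=1}^H sin²(παh)/h ≤ ∑_{h=1}^H (1−(−1)^h)/(2h). -/
/-!
Put `v = πα + π/2`. The difference of the two sides becomes
`S(v) = ∑_{h ≤ H} (-1)^(h+1) sin²(hv)/h`, which is even and `π`-periodic, so it suffices to show
`S ≥ 0` on `[0, π/2]`. There `S' = P` with `2 cos t · P(t) = sin t + sin((2H+1)t)` for odd `H`.
Let `μ = π/(2H+1)`. Then `P ≥ 0` on `[0, μ]`, and since `t ↦ t + μ` flips the sign of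
`sin((2H+1)t)`, also `P(t) + P(t + μ) ≥ 0` as long as `t + μ < π/2`. Hence `S` cannot decrease
across a window of length `2μ`, and `S ≥ 0` on `[0, 2μ]`.
-/

open Real Finset

noncomputable def altSinSqSum (n : ℕ) (v : ℝ) : ℝ :=
  ∑ h ∈ Icc 1 n, (-1) ^ (h + 1) * sin (h * v) ^ 2 / h

noncomputable def altSinSum (n : ℕ) (t : ℝ) : ℝ :=
  ∑ h ∈ Icc 1 n, (-1) ^ (h + 1) * sin (2 * h * t)

theorem altSinSqSum_zero (n : ℕ) : altSinSqSum n 0 = 0 := by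
  simp [altSinSqSum]

theorem altSinSqSum_neg (n : ℕ) (v : ℝ) : altSinSqSum n (-v) = altSinSqSum n v := by
  simp [altSinSqSum]

theorem altSinSqSum_periodic (n : ℕ) : Function.Periodic (altSinSqSum n) π := by
  intro v
  refine sum_congr rfl fun h _ => ?_
  rw [mul_add, sin_add_nat_mul_pi, mul_pow, ← pow_mul, pow_mul', neg_one_sq, one_pow, one_mul]

theorem hasDerivAt_altSinSqSum (n : ℕ) (v : ℝ) :
    HasDerivAt (altSinSqSum n) (altSinSum n v) v := by
  refine HasDerivAt.fun_sum fun h hh => ?_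
  have hh0 : (h : ℝ) ≠ 0 := by have := (mem_Icc.1 hh).1; positivity
  have hsin : HasDerivAt (fun y => sin (h * y)) (cos (h * v) * h) v := by
    simpa using ((hasDerivAt_id v).const_mul (h : ℝ)).sin
  refine (((hsin.fun_pow 2).const_mul ((-1 : ℝ) ^ (h + 1))).div_const (h : ℝ)).congr_deriv ?_
  rw [mul_assoc 2, sin_two_mul]
  field_simp
  ring

theorem continuous_altSinSum (n : ℕ) : Continuous (altSinSum n) := by
  unfold altSinSum; fun_prop

theorem integral_altSinSum (n : ℕ) (a b : ℝ) :
    ∫ t in a..b, altSinSum n t = altSinSqSum n b - altSinSqSum n a :=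
  intervalIntegral.integral_eq_sub_of_hasDerivAt (fun t _ => hasDerivAt_altSinSqSum n t)
    ((continuous_altSinSum n).intervalIntegrable a b)

theorem two_mul_cos_mul_altSinSum (n : ℕ) (t : ℝ) :
    2 * cos t * altSinSum n t = sin t - (-1) ^ n * sin ((2 * n + 1) * t) := by
  induction n with
  | zero => simp [altSinSum]
  | succ n ih =>
    rw [altSinSum, sum_Icc_succ_top (by omega), ← altSinSum, mul_add, ih]
    have := two_mul_sin_mul_cos (2 * (n + 1 : ℕ) * t) t
    rw [show 2 * ((n + 1 : ℕ) : ℝ) * t - t = (2 * n + 1) * t by push_cast; ring,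
      show 2 * ((n + 1 : ℕ) : ℝ) * t + t = (2 * (n + 1 : ℕ) + 1) * t by push_cast; ring] at this
    rw [pow_succ, pow_succ]
    linear_combination (-1) ^ n * this

theorem two_mul_cos_mul_altSinSum_of_odd {n : ℕ} (hn : Odd n) (t : ℝ) :
    2 * cos t * altSinSum n t = sin t + sin ((2 * n + 1) * t) := by
  rw [two_mul_cos_mul_altSinSum, hn.neg_one_pow]
  ring

theorem altSinSum_nonneg_of_le {n : ℕ} (hn : Odd n) {μ t : ℝ} (hμ : (2 * n + 1) * μ = π)
    (ht₀ : 0 ≤ t) (htμ : t ≤ μ) : 0 ≤ altSinSum n t := by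
  have hn₁ : (1 : ℝ) ≤ n := by exact_mod_cast hn.pos
  have hcos : 0 < cos t := cos_pos_of_mem_Ioo ⟨by linarith [pi_pos], by nlinarith [pi_pos]⟩
  have hsin : 0 ≤ sin t := sin_nonneg_of_nonneg_of_le_pi ht₀ (by nlinarith [pi_pos])
  have hsinM : 0 ≤ sin ((2 * n + 1) * t) :=
    sin_nonneg_of_nonneg_of_le_pi (by positivity) (by nlinarith)
  have := two_mul_cos_mul_altSinSum_of_odd hn t
  nlinarith

theorem cos_sub_cos_le_sin_add {s t : ℝ} (hs : 0 ≤ s) (hst : s ≤ t) (ht : t ≤ π / 2) :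
    cos s - cos t ≤ sin (s + t) := by
  have hsin : 0 ≤ sin ((s + t) / 2) := sin_nonneg_of_nonneg_of_le_pi (by linarith) (by linarith)
  have hmono : sin ((t - s) / 2) ≤ cos ((s + t) / 2) := by
    rw [← sin_pi_div_two_sub]
    exact sin_le_sin_of_le_of_le_pi_div_two (by linarith) (by linarith) (by linarith)
  calc cos s - cos t = 2 * sin ((s + t) / 2) * sin ((t - s) / 2) := by
        rw [cos_sub_cos, show (s - t) / 2 = -((t - s) / 2) by ring, sin_neg]; ring
    _ ≤ 2 * sin ((s + t) / 2) * cos ((s + t) / 2) := by gcongr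
    _ = sin (s + t) := by rw [← sin_two_mul]; ring_nf

theorem altSinSum_add_altSinSum_add_nonneg {n : ℕ} (hn : Odd n) {μ t : ℝ}
    (hμ : (2 * n + 1) * μ = π) (ht : 0 ≤ t) (htμ : t + μ < π / 2) :
    0 ≤ altSinSum n t + altSinSum n (t + μ) := by
  have hμ₀ : 0 < μ := by nlinarith [pi_pos]
  have hcos : 0 < cos t := cos_pos_of_mem_Ioo ⟨by linarith [pi_pos], by linarith⟩
  have hcos' : 0 < cos (t + μ) := cos_pos_of_mem_Ioo ⟨by linarith [pi_pos], htμ⟩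
  have hcos_le : cos (t + μ) ≤ cos t :=
    cos_le_cos_of_nonneg_of_le_pi ht (by linarith) (by linarith)
  have hshift : sin ((2 * n + 1) * (t + μ)) = -sin ((2 * n + 1) * t) := by
    rw [mul_add, hμ, sin_add_pi]
  have ht' := two_mul_cos_mul_altSinSum_of_odd hn t
  have htμ' := two_mul_cos_mul_altSinSum_of_odd hn (t + μ)
  rw [hshift] at htμ'
  -- after clearing the denominators `2 cos t` and `2 cos (t + μ)`, the claim is `key`
  have key : sin ((2 * n + 1) * t) * (cos t - cos (t + μ)) ≤ sin (t + (t + μ)) :=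
    calc _ ≤ 1 * (cos t - cos (t + μ)) :=
          mul_le_mul_of_nonneg_right (sin_le_one _) (by linarith)
      _ ≤ _ := by rw [one_mul]; exact cos_sub_cos_le_sin_add ht (by linarith) htμ.le
  have hprod : 0 ≤ 2 * cos t * cos (t + μ) * (altSinSum n t + altSinSum n (t + μ)) := by
    rw [sin_add] at key
    linear_combination (-cos (t + μ)) * ht' - cos t * htμ' + key
  exact (mul_nonneg_iff_of_pos_left (by positivity)).1 hprod

theorem integral_eq_integral_add_shift {f : ℝ → ℝ} (hf : Continuous f) (a c μ : ℝ) :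
    ∫ t in a..c + μ, f t = (∫ t in a..c, (f t + f (t + μ))) + ∫ t in c..a + μ, f t := by
  have hint : ∀ x y : ℝ, IntervalIntegrable f MeasureTheory.volume x y :=
    fun x y => hf.intervalIntegrable x y
  have hint' : IntervalIntegrable (fun t => f (t + μ)) MeasureTheory.volume a c :=
    (hf.comp (continuous_add_const μ)).intervalIntegrable a c
  rw [intervalIntegral.integral_add (hint a c) hint',
    intervalIntegral.integral_comp_add_right f μ, add_right_comm,
    intervalIntegral.integral_add_adjacent_intervals (hint a c) (hint c (a + μ)),
    intervalIntegral.integral_add_adjacent_intervals (hint a (a + μ)) (hint (a + μ) (c + μ))]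

theorem altSinSqSum_add_sub_eq_integral {n : ℕ} (a c μ : ℝ) :
    altSinSqSum n (c + μ) - altSinSqSum n a =
      (∫ t in a..c, (altSinSum n t + altSinSum n (t + μ))) +
        ∫ t in c..a + μ, altSinSum n t := by
  rw [← integral_altSinSum, integral_eq_integral_add_shift (continuous_altSinSum n)]

section

variable {n : ℕ} {μ : ℝ}

theorem integral_altSinSum_add_altSinSum_add_nonneg (hn : Odd n) (hμ : (2 * n + 1) * μ = π)
    {a c : ℝ} (ha : 0 ≤ a) (hac : a ≤ c) (hc : c + μ < π / 2) :
    0 ≤ ∫ t in a..c, (altSinSum n t + altSinSum n (t + μ)) :=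
  intervalIntegral.integral_nonneg hac fun t ht =>
    altSinSum_add_altSinSum_add_nonneg hn hμ (ha.trans ht.1) (by linarith [ht.2])

theorem altSinSqSum_nonneg_of_le_two_mul (hn : Odd n) (hμ : (2 * n + 1) * μ = π) {v : ℝ}
    (hv₀ : 0 ≤ v) (hv : v ≤ 2 * μ) (hv' : v < π / 2) : 0 ≤ altSinSqSum n v := by
  by_cases hvμ : v ≤ μ
  · have h := integral_altSinSum n 0 v
    rw [altSinSqSum_zero, sub_zero] at h
    rw [← h]
    exact intervalIntegral.integral_nonneg hv₀ fun t ht =>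
      altSinSum_nonneg_of_le hn hμ ht.1 (ht.2.trans hvμ)
  · have h := altSinSqSum_add_sub_eq_integral (n := n) 0 (v - μ) μ
    rw [sub_add_cancel, altSinSqSum_zero, sub_zero, zero_add] at h
    rw [h]
    refine add_nonneg
      (integral_altSinSum_add_altSinSum_add_nonneg hn hμ le_rfl (by linarith) (by linarith))
      (intervalIntegral.integral_nonneg (by linarith) fun t ht =>
        altSinSum_nonneg_of_le hn hμ (by linarith [ht.1]) ht.2)

theorem altSinSqSum_sub_two_mul_le (hn : Odd n) (hμ : (2 * n + 1) * μ = π) {v : ℝ}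
    (hv : 2 * μ ≤ v) (hv' : v < π / 2) :
    altSinSqSum n (v - 2 * μ) ≤ altSinSqSum n v := by
  have hμ₀ : 0 < μ := by nlinarith [pi_pos]
  have h := altSinSqSum_add_sub_eq_integral (n := n) (v - 2 * μ) (v - μ) μ
  rw [sub_add_cancel, show v - 2 * μ + μ = v - μ by ring, intervalIntegral.integral_same,
    add_zero] at h
  linarith [integral_altSinSum_add_altSinSum_add_nonneg hn hμ (a := v - 2 * μ) (c := v - μ)
    (by linarith) (by linarith) (by linarith)]

theorem altSinSqSum_nonneg_of_lt_pi_div_two (hn : Odd n) (hμ : (2 * n + 1) * μ = π) {v : ℝ}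
    (hv₀ : 0 ≤ v) (hv : v < π / 2) :
    0 ≤ altSinSqSum n v := by
  have hμ₀ : 0 < μ := by nlinarith [pi_pos]
  obtain ⟨k, hk⟩ := exists_nat_gt (v / (2 * μ))
  rw [div_lt_iff₀ (by positivity)] at hk
  induction k generalizing v with
  | zero => rw [Nat.cast_zero, zero_mul] at hk; linarith
  | succ k ih =>
    by_cases hv₂ : v ≤ 2 * μ
    · exact altSinSqSum_nonneg_of_le_two_mul hn hμ hv₀ hv₂ hv
    · refine (ih (by linarith) (by linarith) ?_).trans
        (altSinSqSum_sub_two_mul_le hn hμ (by linarith) hv)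
      push_cast at hk
      linarith

end

theorem altSinSqSum_nonneg_of_mem_Icc {n : ℕ} (hn : Odd n) {v : ℝ}
    (hv : v ∈ Set.Icc 0 (π / 2)) : 0 ≤ altSinSqSum n v := by
  have hμ : (2 * n + 1) * (π / (2 * n + 1)) = π := by field_simp
  have hclosed : IsClosed {v | 0 ≤ altSinSqSum n v} :=
    isClosed_le continuous_const
      (continuous_iff_continuousAt.2 fun v => (hasDerivAt_altSinSqSum n v).continuousAt)
  -- the window argument needs `cos (t + μ) > 0`, so `π / 2` itself is reached by continuity
  rw [← closure_Ico (by positivity)] at hv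
  exact hclosed.closure_subset_iff.2
    (fun v hv => altSinSqSum_nonneg_of_lt_pi_div_two hn hμ hv.1 hv.2) hv

theorem altSinSqSum_nonneg {n : ℕ} (hn : Odd n) (v : ℝ) : 0 ≤ altSinSqSum n v := by
  obtain ⟨w, ⟨hw₀, hwπ⟩, hvw⟩ := (altSinSqSum_periodic n).exists_mem_Ico₀ pi_pos v
  rw [hvw]
  rcases le_total w (π / 2) with hw | hw
  · exact altSinSqSum_nonneg_of_mem_Icc hn ⟨hw₀, hw⟩
  · rw [← altSinSqSum_neg, ← (altSinSqSum_periodic n).sub_eq']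
    exact altSinSqSum_nonneg_of_mem_Icc hn ⟨by linarith, by linarith⟩

theorem one_sub_neg_one_pow_div_sub_sin_sq_div (h : ℕ) (x : ℝ) :
    (1 - (-1 : ℝ) ^ h) / (2 * h) - sin (x * h) ^ 2 / h =
      (-1) ^ (h + 1) * sin (h * (x + π / 2)) ^ 2 / h := by
  have hshift : cos (2 * (h * (x + π / 2))) = (-1) ^ h * cos (2 * (x * h)) := by
    rw [← cos_add_nat_mul_pi]; ring_nf
  have hsq : ((-1 : ℝ) ^ h) ^ 2 = 1 := by rw [← pow_mul, pow_mul', neg_one_sq, one_pow]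
  rw [sin_sq_eq_half_sub, sin_sq_eq_half_sub, hshift, pow_succ]
  generalize cos (2 * (x * h)) = c
  rcases eq_or_ne (h : ℝ) 0 with h0 | h0
  · simp [h0]
  · field_simp
    linear_combination -c * hsq

theorem sum_sin_sq_div_le_general (H : ℕ) (hodd : Odd H) (α : ℝ) :
    ∑ h ∈ Finset.Icc 1 H, Real.sin (π * α * h) ^ 2 / h ≤
      ∑ h ∈ Finset.Icc 1 H, (1 - (-1 : ℝ) ^ h) / (2 * h) := by
  rw [← sub_nonneg, ← sum_sub_distrib]
  simp_rw [one_sub_neg_one_pow_div_sub_sin_sq_div]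
  exact altSinSqSum_nonneg hodd _

theorem sum_sin_sq_div_le (H : ℕ) (hpos : 0 < H) (hodd : Odd H) (α : ℝ) :
    ∑ h ∈ Finset.Icc 1 H, Real.sin (π * α * h) ^ 2 / h ≤
      ∑ h ∈ Finset.Icc 1 H, (1 - (-1 : ℝ) ^ h) / (2 * h) :=
  sum_sin_sq_div_le_general H hodd α
end

section
/- The function g : [0,1/2] → ℝ defined by g(t) = cos(2πtH)/(4H) + ∑_{h=1}^H (1 − cos(2πth))/(2h), for a fixed positive integer H, is nondecreasing on [0,1/2]; indeed its derivative equals π·sin²(πtH)·cos(πt)/sin(πt) ≥ 0 for t ∈ (0,1/2]. -/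
/-! The derivative of the cosine sum is `π (∑_{h ≤ H} sin(2πth) - sin(2πtH)/2)`, and the sine sum
telescopes after multiplication by `sin(πt)`, since `2 sin(2hx) sin x = cos((2h-1)x) - cos((2h+1)x)`.
This gives the closed form `π sin²(πtH) cos(πt) / sin(πt)`, which is nonnegative for
`0 < t ≤ 1/2`, so the function is monotone by the mean value theorem. -/

open Real

lemma sum_Icc_sin_two_mul_mul_sin (x : ℝ) (n : ℕ) :
    (∑ h ∈ Finset.Icc 1 n, sin (2 * x * h)) * sin x = sin (x * n) * sin (x * (n + 1)) := by
  induction n with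
  | zero => simp
  | succ n ih =>
    rw [Finset.sum_Icc_succ_top (by omega), add_mul, ih]
    push_cast
    rw [show x * (n + 1 + 1) = x * (n + 1) + x by ring,
      show x * (n : ℝ) = x * (n + 1) - x by ring,
      show 2 * x * ((n : ℝ) + 1) = x * (n + 1) + x * (n + 1) by ring,
      sin_add, sin_sub, sin_add]
    ring

lemma sum_Icc_sin_two_mul_sub_half (x : ℝ) (n : ℕ) (hx : sin x ≠ 0) :
    ∑ h ∈ Finset.Icc 1 n, sin (2 * x * h) - sin (2 * x * n) / 2
      = sin (x * n) ^ 2 * cos x / sin x := by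
  have key := sum_Icc_sin_two_mul_mul_sin x n
  rw [show x * ((n : ℝ) + 1) = x * n + x by ring, sin_add] at key
  rw [show 2 * x * (n : ℝ) = 2 * (x * n) by ring, sin_two_mul, eq_div_iff hx]
  linear_combination key

-- When `b * c = 0` both sides vanish, since `x / 0 = 0`.
lemma hasDerivAt_cos_mul_div (a b c t : ℝ) :
    HasDerivAt (fun t => cos (a * t * c) / (b * c)) (-(a / b) * sin (a * t * c)) t := by
  have h := (((hasDerivAt_id t).const_mul a).mul_const c).cos.div_const (b * c)
  simp only [id, mul_one] at h
  rcases eq_or_ne c 0 with rfl | hc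
  · simpa using h
  · refine h.congr_deriv ?_
    rcases eq_or_ne b 0 with rfl | hb
    · simp
    · field_simp

lemma hasDerivAt_one_sub_cos_mul_div (a b c t : ℝ) :
    HasDerivAt (fun t => (1 - cos (a * t * c)) / (b * c)) (a / b * sin (a * t * c)) t := by
  simp_rw [sub_div]
  exact ((hasDerivAt_const t _).sub (hasDerivAt_cos_mul_div a b c t)).congr_deriv (by ring)

noncomputable def cosSum (H : ℕ) (t : ℝ) : ℝ :=
  cos (2 * π * t * H) / (4 * H) + ∑ h ∈ Finset.Icc 1 H, (1 - cos (2 * π * t * h)) / (2 * h)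

lemma hasDerivAt_cosSum (H : ℕ) (t : ℝ) :
    HasDerivAt (cosSum H)
      (π * (∑ h ∈ Finset.Icc 1 H, sin (2 * π * t * h) - sin (2 * π * t * H) / 2)) t := by
  refine ((hasDerivAt_cos_mul_div (2 * π) 4 H t).add
    (HasDerivAt.fun_sum fun (h : ℕ) _ => hasDerivAt_one_sub_cos_mul_div (2 * π) 2 h t)).congr_deriv ?_
  rw [mul_sub, Finset.mul_sum]
  ring_nf

lemma hasDerivAt_cosSum_of_sin_ne_zero (H : ℕ) {t : ℝ} (ht : sin (π * t) ≠ 0) :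
    HasDerivAt (cosSum H) (π * sin (π * t * H) ^ 2 * cos (π * t) / sin (π * t)) t := by
  have h := sum_Icc_sin_two_mul_sub_half (π * t) H ht
  simp only [← mul_assoc] at h
  convert hasDerivAt_cosSum H t using 1
  rw [h]
  ring

lemma sin_pi_mul_pos {t : ℝ} (ht : t ∈ Set.Ioc 0 (1 / 2)) : 0 < sin (π * t) :=
  sin_pos_of_pos_of_lt_pi (mul_pos pi_pos ht.1) (by nlinarith [pi_pos, ht.2])

lemma pi_mul_sq_mul_cos_div_sin_nonneg {t : ℝ} (ht : t ∈ Set.Ioc 0 (1 / 2)) (y : ℝ) :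
    0 ≤ π * y ^ 2 * cos (π * t) / sin (π * t) := by
  have hcos : 0 ≤ cos (π * t) :=
    cos_nonneg_of_neg_pi_div_two_le_of_le (by nlinarith [pi_pos, ht.1]) (by nlinarith [pi_pos, ht.2])
  have := sin_pi_mul_pos ht
  positivity

lemma monotoneOn_cosSum (H : ℕ) : MonotoneOn (cosSum H) (Set.Icc 0 (1 / 2)) := by
  refine monotoneOn_of_hasDerivWithinAt_nonneg (convex_Icc 0 (1 / 2))
    (f' := fun t => π * sin (π * t * H) ^ 2 * cos (π * t) / sin (π * t))
    (Continuous.continuousOn (by unfold cosSum; fun_prop)) (fun t ht => ?_) (fun t ht => ?_)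
  all_goals rw [interior_Icc] at ht
  · exact (hasDerivAt_cosSum_of_sin_ne_zero H
      (sin_pi_mul_pos (Set.Ioo_subset_Ioc_self ht)).ne').hasDerivWithinAt
  · exact pi_mul_sq_mul_cos_div_sin_nonneg (Set.Ioo_subset_Ioc_self ht) _

theorem g_monotone_and_deriv_general (H : ℕ) :
    MonotoneOn
      (fun t : ℝ => Real.cos (2 * π * t * H) / (4 * H) +
        ∑ h ∈ Finset.Icc 1 H, (1 - Real.cos (2 * π * t * h)) / (2 * h))
      (Set.Icc 0 (1 / 2)) ∧
    ∀ t ∈ Set.Ioc (0 : ℝ) (1 / 2),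
      HasDerivAt
        (fun t : ℝ => Real.cos (2 * π * t * H) / (4 * H) +
          ∑ h ∈ Finset.Icc 1 H, (1 - Real.cos (2 * π * t * h)) / (2 * h))
        (π * Real.sin (π * t * H) ^ 2 * Real.cos (π * t) / Real.sin (π * t)) t ∧
      0 ≤ π * Real.sin (π * t * H) ^ 2 * Real.cos (π * t) / Real.sin (π * t) :=
  ⟨monotoneOn_cosSum H, fun _ ht =>
    ⟨hasDerivAt_cosSum_of_sin_ne_zero H (sin_pi_mul_pos ht).ne',
      pi_mul_sq_mul_cos_div_sin_nonneg ht _⟩⟩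

theorem g_monotone_and_deriv (H : ℕ) (hH : 0 < H) :
    MonotoneOn
      (fun t : ℝ => Real.cos (2 * π * t * H) / (4 * H) +
        ∑ h ∈ Finset.Icc 1 H, (1 - Real.cos (2 * π * t * h)) / (2 * h))
      (Set.Icc 0 (1 / 2)) ∧
    ∀ t ∈ Set.Ioc (0 : ℝ) (1 / 2),
      HasDerivAt
        (fun t : ℝ => Real.cos (2 * π * t * H) / (4 * H) +
          ∑ h ∈ Finset.Icc 1 H, (1 - Real.cos (2 * π * t * h)) / (2 * h))
        (π * Real.sin (π * t * H) ^ 2 * Real.cos (π * t) / Real.sin (π * t)) t ∧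
      0 ≤ π * Real.sin (π * t * H) ^ 2 * Real.cos (π * t) / Real.sin (π * t) :=
  g_monotone_and_deriv_general H
end

section
/- Let (X(h))_{h∈ℤ∖{0}} be independent identically distributed real random variables with |X(h)| ≤ N almost surely and E(X(h)^{2ℓ+1}) = 0 for all integers ℓ ≥ 0. Let (c(h)) be complex numbers with |c(h)| ≤ c₀/|h|. Then for all real 1 ≤ y < z and all positive integers n, E(|∑_{y≤|h|<z} c(h)X(h)|^{2n}) ≤ (8(c₀N)²n/y)^n. -/
open MeasureTheory ProbabilityTheory Real Finset
open scoped NNReal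

/-!
Hoeffding's lemma and independence make every real combination `∑ r h * X h` sub-Gaussian
with variance proxy `σ² = N² ∑ r h ²`. Integrating
`x ^ (2n) ≤ (2n / (e t)) ^ (2n) (e^{tx} + e^{-tx})` against the sub-Gaussian bound on the
moment generating function, at the optimal `t² = 2n / σ²`, gives `E S ^ (2n) ≤ 2 (2n σ² / e) ^ n`.
Treating real and imaginary parts separately costs a factor `2 ^ (n - 1)`, and
`∑_{|h| ≥ y} |c h|² ≤ 4 c₀² / y`; as `e ≥ 2`, the constant `16 / e` fits under `8`.
-/

lemma pow_le_div_exp_one_pow_mul_exp {u : ℝ} (hu : 0 ≤ u) (m : ℕ) :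
    u ^ m ≤ (m / exp 1) ^ m * exp u := by
  rcases m.eq_zero_or_pos with rfl | hm
  · simpa using one_le_exp hu
  have hm' : (0 : ℝ) < m := by exact_mod_cast hm
  calc u ^ m = (m : ℝ) ^ m * (u / m) ^ m := by rw [← mul_pow, mul_div_cancel₀ _ hm'.ne']
    _ ≤ (m : ℝ) ^ m * exp (u / m - 1) ^ m := by
        gcongr
        linarith [add_one_le_exp (u / m - 1)]
    _ = (m / exp 1) ^ m * exp u := by
        rw [← exp_nat_mul, mul_sub, mul_div_cancel₀ _ hm'.ne', exp_sub, div_pow, ← exp_nat_mul]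
        ring

lemma pow_two_mul_le_mul_exp_add_exp {t : ℝ} (ht : 0 < t) (x : ℝ) (n : ℕ) :
    x ^ (2 * n) ≤ (2 * n / (exp 1 * t)) ^ (2 * n) * (exp (t * x) + exp (-t * x)) := by
  have hexp : exp |t * x| ≤ exp (t * x) + exp (-t * x) := by
    rcases abs_cases (t * x) with ⟨h, -⟩ | ⟨h, -⟩ <;> rw [h] <;> simp only [neg_mul] <;>
      linarith [exp_pos (t * x), exp_pos (-(t * x))]
  calc x ^ (2 * n) = |t * x| ^ (2 * n) / t ^ (2 * n) := by
        rw [(even_two_mul n).pow_abs, mul_pow, mul_div_cancel_left₀ _ (by positivity)]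
    _ ≤ ((2 * n : ℕ) / exp 1) ^ (2 * n) * exp |t * x| / t ^ (2 * n) := by
        gcongr; exact pow_le_div_exp_one_pow_mul_exp (abs_nonneg _) _
    _ ≤ ((2 * n : ℕ) / exp 1) ^ (2 * n) * (exp (t * x) + exp (-t * x)) / t ^ (2 * n) := by
        gcongr
    _ = (2 * n / (exp 1 * t)) ^ (2 * n) * (exp (t * x) + exp (-t * x)) := by
        push_cast; ring

lemma Complex.norm_pow_two_mul_le (w : ℂ) (n : ℕ) :
    ‖w‖ ^ (2 * n) ≤ 2 ^ (n - 1) * (w.re ^ (2 * n) + w.im ^ (2 * n)) := by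
  simpa only [pow_mul, Complex.sq_norm, Complex.normSq_apply, ← sq] using
    add_pow_le (sq_nonneg w.re) (sq_nonneg w.im) n

lemma sum_inv_sq_le_two_div_of_le {y : ℝ} (hy : 0 < y) {t : Finset ℕ} (ht : ∀ k ∈ t, y ≤ k) :
    ∑ k ∈ t, ((k : ℝ) ^ 2)⁻¹ ≤ 2 / y := by
  have hceil : 1 ≤ ⌈y⌉₊ := Nat.ceil_pos.mpr hy
  have hsub : t ⊆ Ioo (⌈y⌉₊ - 1) (t.sup id + 1) := fun k hk ↦ by
    have h1 := Nat.ceil_le.mpr (ht k hk)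
    have h2 : k ≤ t.sup id := Finset.le_sup (f := id) hk
    rw [mem_Ioo]
    omega
  calc ∑ k ∈ t, ((k : ℝ) ^ 2)⁻¹ ≤ ∑ k ∈ Ioo (⌈y⌉₊ - 1) (t.sup id + 1), ((k : ℝ) ^ 2)⁻¹ :=
        sum_le_sum_of_subset_of_nonneg hsub fun _ _ _ ↦ by positivity
    _ ≤ 2 / (((⌈y⌉₊ - 1 : ℕ) : ℝ) + 1) := sum_Ioo_inv_sq_le _ _
    _ ≤ 2 / y := by
        rw [Nat.cast_sub hceil, Nat.cast_one, sub_add_cancel]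
        gcongr
        exact Nat.le_ceil y

lemma sum_int_inv_sq_le_four_div_of_le_abs {y : ℝ} (hy : 0 < y) {s : Finset ℤ}
    (hs : ∀ h ∈ s, y ≤ |(h : ℝ)|) : ∑ h ∈ s, ((h : ℝ) ^ 2)⁻¹ ≤ 4 / y := by
  have hfiber (k : ℕ) : #{h ∈ s | h.natAbs = k} ≤ 2 := by
    refine (card_le_card fun h hh ↦ ?_).trans (card_le_two (a := (k : ℤ)) (b := -k))
    rcases Int.natAbs_eq_iff.mp (mem_filter.mp hh).2 with rfl | rfl <;> simp
  have himage : ∀ k ∈ s.image Int.natAbs, y ≤ k := by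
    simp only [mem_image, forall_exists_index, and_imp]
    rintro _ h hh rfl
    simpa [Nat.cast_natAbs] using hs h hh
  calc ∑ h ∈ s, ((h : ℝ) ^ 2)⁻¹ = ∑ h ∈ s, (((h.natAbs : ℕ) : ℝ) ^ 2)⁻¹ := by
        simp [Nat.cast_natAbs]
    _ = ∑ k ∈ s.image Int.natAbs, #{h ∈ s | h.natAbs = k} • ((k : ℝ) ^ 2)⁻¹ :=
        sum_comp (fun k : ℕ ↦ ((k : ℝ) ^ 2)⁻¹) Int.natAbs
    _ ≤ ∑ k ∈ s.image Int.natAbs, 2 * ((k : ℝ) ^ 2)⁻¹ := by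
        gcongr with k
        rw [nsmul_eq_mul]
        gcongr
        exact_mod_cast hfiber k
    _ ≤ 2 * (2 / y) := by
        rw [← mul_sum]
        gcongr
        exact sum_inv_sq_le_two_div_of_le hy himage
    _ = 4 / y := by ring

namespace ProbabilityTheory.HasSubgaussianMGF

variable {Ω : Type*} [MeasurableSpace Ω] {μ : Measure Ω} {X : Ω → ℝ} {c : ℝ≥0}

lemma integral_pow_two_mul_le_of_pos (h : HasSubgaussianMGF X c μ) {t : ℝ} (ht : 0 < t)
    (n : ℕ) :
    ∫ ω, X ω ^ (2 * n) ∂μ ≤ (2 * n / (exp 1 * t)) ^ (2 * n) * (2 * exp (c * t ^ 2 / 2)) := by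
  have hint := (h.integrable_exp_mul t).add (h.integrable_exp_mul (-t))
  calc ∫ ω, X ω ^ (2 * n) ∂μ
      ≤ ∫ ω, (2 * n / (exp 1 * t)) ^ (2 * n) * (exp (t * X ω) + exp (-t * X ω)) ∂μ :=
        integral_mono_of_nonneg (ae_of_all _ fun ω ↦ (even_two_mul n).pow_nonneg _)
          (hint.const_mul _) (ae_of_all _ fun ω ↦ pow_two_mul_le_mul_exp_add_exp ht (X ω) n)
    _ = (2 * n / (exp 1 * t)) ^ (2 * n) * (mgf X μ t + mgf X μ (-t)) := by
        rw [integral_const_mul, integral_add (h.integrable_exp_mul t) (h.integrable_exp_mul (-t))]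
        rfl
    _ ≤ (2 * n / (exp 1 * t)) ^ (2 * n) * (2 * exp (c * t ^ 2 / 2)) := by
        have := h.mgf_le (-t)
        rw [neg_sq] at this
        gcongr
        linarith [h.mgf_le t]

lemma integral_pow_two_mul_le [IsProbabilityMeasure μ] (h : HasSubgaussianMGF X c μ) (n : ℕ) :
    ∫ ω, X ω ^ (2 * n) ∂μ ≤ 2 * (2 * n * c / exp 1) ^ n := by
  rcases n.eq_zero_or_pos with rfl | hn
  · norm_num
  rcases eq_zero_or_pos c with rfl | hc
  · rw [integral_congr_ae (h.ae_eq_zero_of_hasSubgaussianMGF_zero.mono fun ω hω ↦ by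
      rw [hω, Pi.zero_apply, zero_pow (by omega)])]
    simp [hn.ne']
  have hc' : (0 : ℝ) < c := hc
  have hn' : (0 : ℝ) < n := by exact_mod_cast hn
  set t := √(2 * n / c)
  have ht : t ^ 2 = 2 * n / c := sq_sqrt (by positivity)
  refine (h.integral_pow_two_mul_le_of_pos (t := t) (sqrt_pos.mpr (by positivity)) n).trans_eq ?_
  have hpow : (2 * n / (exp 1 * t)) ^ (2 * n) = (2 * n * c / exp 1 ^ 2) ^ n := by
    rw [pow_mul, div_pow, mul_pow (exp 1), ht]
    field_simp
  have hexp : exp (c * t ^ 2 / 2) = exp 1 ^ n := by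
    rw [ht, exp_one_pow]
    field_simp
  rw [hpow, hexp, div_pow, div_pow, ← pow_mul]
  field_simp
  ring

end ProbabilityTheory.HasSubgaussianMGF

section
variable {Ω : Type*} [MeasurableSpace Ω] {μ : Measure Ω} [IsProbabilityMeasure μ]

lemma hasSubgaussianMGF_of_abs_le_of_integral_eq_zero {X : Ω → ℝ} {a : ℝ}
    (hm : AEMeasurable X μ) (hb : ∀ᵐ ω ∂μ, |X ω| ≤ a) (hc : μ[X] = 0) :
    HasSubgaussianMGF X (‖a‖₊ ^ 2) μ := by
  have hparam : ‖a‖₊ = ‖a - -a‖₊ / 2 := by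
    ext
    simp [← two_mul]
  rw [hparam]
  exact hasSubgaussianMGF_of_mem_Icc_of_integral_eq_zero hm (hb.mono fun _ ↦ abs_le.mp) hc

lemma hasSubgaussianMGF_sum_mul_of_abs_le {ι : Type*} {X : ι → Ω → ℝ} {a : ℝ}
    (hm : ∀ i, AEMeasurable (X i) μ) (hind : iIndepFun X μ) (hb : ∀ i, ∀ᵐ ω ∂μ, |X i ω| ≤ a)
    (hc : ∀ i, μ[X i] = 0) (s : Finset ι) (r : ι → ℝ) :
    HasSubgaussianMGF (fun ω ↦ ∑ i ∈ s, r i * X i ω) (∑ i ∈ s, ‖|r i| * a‖₊ ^ 2) μ := by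
  refine HasSubgaussianMGF.sum_of_iIndepFun
    (hind.comp (fun i x ↦ r i * x) fun _ ↦ measurable_const_mul _) fun i _ ↦ ?_
  refine hasSubgaussianMGF_of_abs_le_of_integral_eq_zero ((hm i).const_mul _) ?_ ?_
  · filter_upwards [hb i] with ω hω
    simpa only [Function.comp_apply, abs_mul] using mul_le_mul_of_nonneg_left hω (abs_nonneg _)
  · simp [integral_const_mul, hc i]

lemma integral_sum_mul_pow_two_mul_le {ι : Type*} {X : ι → Ω → ℝ} {a : ℝ}
    (hm : ∀ i, AEMeasurable (X i) μ) (hind : iIndepFun X μ) (hb : ∀ i, ∀ᵐ ω ∂μ, |X i ω| ≤ a)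
    (hc : ∀ i, μ[X i] = 0) (s : Finset ι) (r : ι → ℝ) (n : ℕ) :
    ∫ ω, (∑ i ∈ s, r i * X i ω) ^ (2 * n) ∂μ
      ≤ 2 * (2 * n * (a ^ 2 * ∑ i ∈ s, r i ^ 2) / exp 1) ^ n := by
  convert (hasSubgaussianMGF_sum_mul_of_abs_le hm hind hb hc s r).integral_pow_two_mul_le n using 5
  simp [mul_sum, mul_pow, mul_comm]

lemma integral_norm_sum_mul_pow_two_mul_le {ι : Type*} {X : ι → Ω → ℝ} {a : ℝ}
    (hm : ∀ i, AEMeasurable (X i) μ) (hind : iIndepFun X μ) (hb : ∀ i, ∀ᵐ ω ∂μ, |X i ω| ≤ a)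
    (hc : ∀ i, μ[X i] = 0) (s : Finset ι) (c : ι → ℂ) {n : ℕ} (hn : n ≠ 0) :
    ∫ ω, ‖∑ i ∈ s, c i * X i ω‖ ^ (2 * n) ∂μ
      ≤ (4 * n * (a ^ 2 * ∑ i ∈ s, ‖c i‖ ^ 2) / exp 1) ^ n := by
  set A := ∑ i ∈ s, (c i).re ^ 2
  set B := ∑ i ∈ s, (c i).im ^ 2
  have hint (r : ι → ℝ) : Integrable (fun ω ↦ (∑ i ∈ s, r i * X i ω) ^ (2 * n)) μ :=
    have hr := hasSubgaussianMGF_sum_mul_of_abs_le hm hind hb hc s r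
    integrable_pow_of_integrable_exp_mul one_ne_zero (hr.integrable_exp_mul 1)
      (hr.integrable_exp_mul (-1)) _
  have hpt (ω : Ω) : ‖∑ i ∈ s, c i * X i ω‖ ^ (2 * n) ≤ 2 ^ (n - 1) *
      ((∑ i ∈ s, (c i).re * X i ω) ^ (2 * n) + (∑ i ∈ s, (c i).im * X i ω) ^ (2 * n)) := by
    simpa only [Complex.re_sum, Complex.im_sum, Complex.re_mul_ofReal, Complex.im_mul_ofReal]
      using Complex.norm_pow_two_mul_le (∑ i ∈ s, c i * X i ω) n
  have hAB : A + B = ∑ i ∈ s, ‖c i‖ ^ 2 := by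
    rw [← sum_add_distrib]
    refine sum_congr rfl fun i _ ↦ ?_
    rw [Complex.sq_norm, Complex.normSq_apply]
    ring
  calc ∫ ω, ‖∑ i ∈ s, c i * X i ω‖ ^ (2 * n) ∂μ
      ≤ ∫ ω, 2 ^ (n - 1) *
          ((∑ i ∈ s, (c i).re * X i ω) ^ (2 * n) + (∑ i ∈ s, (c i).im * X i ω) ^ (2 * n)) ∂μ :=
        integral_mono_of_nonneg (ae_of_all _ fun _ ↦ by positivity)
          (((hint _).add (hint _)).const_mul _) (ae_of_all _ hpt)
    _ = 2 ^ (n - 1) * (∫ ω, (∑ i ∈ s, (c i).re * X i ω) ^ (2 * n) ∂μ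
          + ∫ ω, (∑ i ∈ s, (c i).im * X i ω) ^ (2 * n) ∂μ) := by
        rw [integral_const_mul, integral_add (hint _) (hint _)]
    _ ≤ 2 ^ (n - 1) * (2 * (2 * n * (a ^ 2 * A) / exp 1) ^ n
          + 2 * (2 * n * (a ^ 2 * B) / exp 1) ^ n) := by
        gcongr <;> exact integral_sum_mul_pow_two_mul_le hm hind hb hc s _ n
    _ = (2 ^ (n - 1) * 2) * (2 * n * a ^ 2 / exp 1) ^ n * (A ^ n + B ^ n) := by
        ring
    _ = (4 * n * a ^ 2 / exp 1) ^ n * (A ^ n + B ^ n) := by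
        rw [← pow_succ, Nat.sub_add_cancel (Nat.one_le_iff_ne_zero.mpr hn), ← mul_pow]
        congr 2
        ring
    _ ≤ (4 * n * a ^ 2 / exp 1) ^ n * (A + B) ^ n := by
        gcongr
        exact pow_add_pow_le (by positivity) (by positivity) hn
    _ = (4 * n * (a ^ 2 * ∑ i ∈ s, ‖c i‖ ^ 2) / exp 1) ^ n := by
        rw [← hAB, ← mul_pow]
        ring_nf

end

theorem even_moment_bound_general
    {Ω : Type*} [MeasureSpace Ω] [IsProbabilityMeasure (ℙ : Measure Ω)]
    (N c₀ : ℝ)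
    (X : ℤ → Ω → ℝ)
    (hmeas : ∀ h, Measurable (X h))
    (hind : iIndepFun X)
    (hbd : ∀ h : ℤ, ∀ᵐ ω, |X h ω| ≤ N)
    (hodd : ∀ h : ℤ, ∀ ℓ : ℕ, ∫ ω, (X h ω) ^ (2 * ℓ + 1) = 0)
    (c : ℤ → ℂ) (hc : ∀ h : ℤ, h ≠ 0 → ‖c h‖ ≤ c₀ / |(h : ℝ)|)
    (y z : ℝ) (hy : 1 ≤ y) (n : ℕ) (hn : 1 ≤ n) :
    ∫ ω, ‖∑ h ∈ (Finset.Icc (-⌈z⌉ : ℤ) ⌈z⌉).filter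
          (fun h : ℤ => y ≤ |(h : ℝ)| ∧ |(h : ℝ)| < z),
        c h * (X h ω : ℂ)‖ ^ (2 * n)
      ≤ (8 * (c₀ * N) ^ 2 * n / y) ^ n := by
  set H := (Finset.Icc (-⌈z⌉ : ℤ) ⌈z⌉).filter (fun h : ℤ ↦ y ≤ |(h : ℝ)| ∧ |(h : ℝ)| < z)
  have hy₀ : 0 < y := by linarith
  have hH : ∀ h ∈ H, y ≤ |(h : ℝ)| := fun h hh ↦ (mem_filter.mp hh).2.1
  have hterm : ∀ h ∈ H, ‖c h‖ ^ 2 ≤ c₀ ^ 2 * ((h : ℝ) ^ 2)⁻¹ := fun h hh ↦ by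
    have hh₀ : h ≠ 0 := by rintro rfl; simpa using hy₀.trans_le (hH 0 hh)
    calc ‖c h‖ ^ 2 ≤ (c₀ / |(h : ℝ)|) ^ 2 := pow_le_pow_left₀ (norm_nonneg _) (hc h hh₀) 2
      _ = c₀ ^ 2 * ((h : ℝ) ^ 2)⁻¹ := by rw [div_pow, sq_abs, div_eq_mul_inv]
  have hcH : ∑ h ∈ H, ‖c h‖ ^ 2 ≤ 4 * c₀ ^ 2 / y := by
    calc ∑ h ∈ H, ‖c h‖ ^ 2 ≤ c₀ ^ 2 * ∑ h ∈ H, ((h : ℝ) ^ 2)⁻¹ := by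
          rw [mul_sum]
          exact sum_le_sum hterm
      _ ≤ c₀ ^ 2 * (4 / y) := by gcongr; exact sum_int_inv_sq_le_four_div_of_le_abs hy₀ hH
      _ = 4 * c₀ ^ 2 / y := by ring
  have he : 2 ≤ exp 1 := by linarith [add_one_le_exp (1 : ℝ)]
  calc _ ≤ (4 * n * (N ^ 2 * ∑ h ∈ H, ‖c h‖ ^ 2) / exp 1) ^ n :=
        integral_norm_sum_mul_pow_two_mul_le (fun h ↦ (hmeas h).aemeasurable) hind hbd
          (fun h ↦ by simpa using hodd h 0) H c (by omega)
    _ ≤ (4 * n * (N ^ 2 * (4 * c₀ ^ 2 / y)) / 2) ^ n := by gcongr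
    _ = (8 * (c₀ * N) ^ 2 * n / y) ^ n := by ring

theorem even_moment_bound
    {Ω : Type*} [MeasureSpace Ω] [IsProbabilityMeasure (ℙ : Measure Ω)]
    (N c₀ : ℝ) (hN : 0 < N) (hc₀ : 0 < c₀)
    (X : ℤ → Ω → ℝ)
    (hmeas : ∀ h, Measurable (X h))
    (hind : iIndepFun X)
    (hid : ∀ h h' : ℤ, IdentDistrib (X h) (X h'))
    (hbd : ∀ h : ℤ, ∀ᵐ ω, |X h ω| ≤ N)
    (hodd : ∀ h : ℤ, ∀ ℓ : ℕ, ∫ ω, (X h ω) ^ (2 * ℓ + 1) = 0)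
    (c : ℤ → ℂ) (hc : ∀ h : ℤ, h ≠ 0 → ‖c h‖ ≤ c₀ / |(h : ℝ)|)
    (y z : ℝ) (hy : 1 ≤ y) (hyz : y < z) (n : ℕ) (hn : 1 ≤ n) :
    ∫ ω, ‖∑ h ∈ (Finset.Icc (-⌈z⌉ : ℤ) ⌈z⌉).filter
          (fun h : ℤ => y ≤ |(h : ℝ)| ∧ |(h : ℝ)| < z),
        c h * (X h ω : ℂ)‖ ^ (2 * n)
      ≤ (8 * (c₀ * N) ^ 2 * n / y) ^ n :=
  even_moment_bound_general N c₀ X hmeas hind hbd hodd c hc y z hy n hn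
end

section
/- Let (X(h)) be I.I.D. real random variables bounded by N with all odd moments zero, and |c(h)| ≤ c₀/|h|. Then for all integers k ≥ 1 and reals 1 ≤ y < z with k > y, E(|∑_{y≤|h|<z} c(h)X(h)|^k) ≤ (10 c₀ N log k)^k. -/
open MeasureTheory ProbabilityTheory
open scoped Nat

/-!
Split the range at `|h| = k`. On the short range `y ≤ |h| < k` the sum is bounded pointwise by
`c₀ N ∑ 1/|h| ≤ 2 c₀ N (1 + log k)`. On the long range `|h| ≥ k` one has `∑ ‖c h‖² ≤ 4 c₀² / k`,
and the even-moment bound `E (∑ a_h X_h)^(2k) ≤ (2k-1)‼ (N² ∑ a_h²)^k`, applied to the real and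
imaginary parts and followed by Cauchy–Schwarz, gives
`(E ‖∑‖^k)² ≤ (2 k N² ∑ ‖c h‖²)^k ≤ (8 c₀² N²)^k`, so `E ‖∑‖^k ≤ (3 c₀ N)^k`.
The pieces are recombined by `(a + b)^k ≤ 2^(k-1) (a^k + b^k)`; as `log k ≥ log 2 > 2/3`, both
`2 c₀ N (1 + log k)` and `3 c₀ N` are at most `5 c₀ N log k`.

The even-moment bound is the multinomial expansion: by independence and the vanishing odd moments
only exponent vectors `2β` contribute, and `multinomial (2β) ≤ (2k-1)‼ multinomial β`.
-/

lemma sum_comp_natAbs_le_two_mul {S : Finset ℤ} {t : Finset ℕ} {f : ℕ → ℝ}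
    (hf : ∀ n ∈ t, 0 ≤ f n) (hS : ∀ h ∈ S, h.natAbs ∈ t) :
    ∑ h ∈ S, f h.natAbs ≤ 2 * ∑ n ∈ t, f n := by
  classical
  have himage : S.image Int.natAbs ⊆ t := Finset.image_subset_iff.2 hS
  have hfiber (n : ℕ) : (S.filter (·.natAbs = n)).card ≤ 2 := by
    calc (S.filter (·.natAbs = n)).card ≤ ({(n : ℤ), -(n : ℤ)} : Finset ℤ).card :=
          Finset.card_le_card fun h hh => by
            simp only [Finset.mem_filter] at hh
            simp only [Finset.mem_insert, Finset.mem_singleton]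
            omega
      _ ≤ 2 := Finset.card_le_two
  rw [Finset.sum_comp, Finset.mul_sum]
  calc ∑ n ∈ S.image Int.natAbs, (S.filter (·.natAbs = n)).card • f n
      ≤ ∑ n ∈ S.image Int.natAbs, 2 * f n := Finset.sum_le_sum fun n hn => by
        rw [nsmul_eq_mul]
        exact mul_le_mul_of_nonneg_right (by exact_mod_cast hfiber n) (hf n (himage hn))
    _ ≤ ∑ n ∈ t, 2 * f n := Finset.sum_le_sum_of_subset_of_nonneg himage fun n hn _ => by
        linarith [hf n hn]

lemma abs_intCast_eq_natAbs (h : ℤ) : |(h : ℝ)| = h.natAbs := by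
  simp [Nat.cast_natAbs]

lemma sum_inv_abs_le_two_mul_one_add_log {S : Finset ℤ} {n : ℕ}
    (hS : ∀ h ∈ S, 1 ≤ |(h : ℝ)| ∧ |(h : ℝ)| ≤ n) :
    ∑ h ∈ S, |(h : ℝ)|⁻¹ ≤ 2 * (1 + Real.log n) := by
  simp_rw [abs_intCast_eq_natAbs] at hS ⊢
  calc ∑ h ∈ S, ((h.natAbs : ℕ) : ℝ)⁻¹ ≤ 2 * ∑ m ∈ Finset.Icc 1 n, (m : ℝ)⁻¹ :=
        sum_comp_natAbs_le_two_mul (f := fun m : ℕ => (m : ℝ)⁻¹) (fun _ _ => by positivity)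
          fun h hh => by
          rw [Finset.mem_Icc]
          exact_mod_cast hS h hh
    _ = 2 * harmonic n := by rw [harmonic_eq_sum_Icc]; push_cast; rfl
    _ ≤ 2 * (1 + Real.log n) := by gcongr; exact harmonic_le_one_add_log n

lemma sum_inv_sq_le_four_div {S : Finset ℤ} {n : ℕ} (hn : 1 ≤ n)
    (hS : ∀ h ∈ S, (n : ℝ) ≤ |(h : ℝ)|) :
    ∑ h ∈ S, ((h : ℝ) ^ 2)⁻¹ ≤ 4 / n := by
  obtain ⟨M, hM⟩ : ∃ M : ℕ, ∀ h ∈ S, h.natAbs < M :=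
    ⟨S.sup Int.natAbs + 1, fun h hh => Nat.lt_succ_of_le (Finset.le_sup hh)⟩
  have hsq (h : ℤ) : (h : ℝ) ^ 2 = ((h.natAbs : ℕ) : ℝ) ^ 2 := by
    rw [← abs_intCast_eq_natAbs, sq_abs]
  simp_rw [abs_intCast_eq_natAbs] at hS
  simp_rw [hsq]
  calc ∑ h ∈ S, (((h.natAbs : ℕ) : ℝ) ^ 2)⁻¹ ≤ 2 * ∑ m ∈ Finset.Ioo (n - 1) M, ((m : ℝ) ^ 2)⁻¹ :=
        sum_comp_natAbs_le_two_mul (f := fun m : ℕ => ((m : ℝ) ^ 2)⁻¹) (fun _ _ => by positivity)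
          fun h hh => by
          have : n ≤ h.natAbs := by exact_mod_cast hS h hh
          rw [Finset.mem_Ioo]
          exact ⟨by omega, hM h hh⟩
    _ ≤ 2 * (2 / ((n - 1 : ℕ) + 1)) := by gcongr; exact sum_Ioo_inv_sq_le _ _
    _ = 4 / n := by rw [Nat.cast_sub hn]; ring

lemma sum_norm_le_two_mul_one_add_log {E : Type*} [Norm E] {S : Finset ℤ} {c : ℤ → E} {c₀ : ℝ}
    {n : ℕ} (hc₀ : 0 ≤ c₀) (hc : ∀ h ∈ S, ‖c h‖ ≤ c₀ / |(h : ℝ)|)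
    (hS : ∀ h ∈ S, 1 ≤ |(h : ℝ)| ∧ |(h : ℝ)| ≤ n) :
    ∑ h ∈ S, ‖c h‖ ≤ 2 * c₀ * (1 + Real.log n) := by
  calc ∑ h ∈ S, ‖c h‖ ≤ c₀ * ∑ h ∈ S, |(h : ℝ)|⁻¹ := by
        rw [Finset.mul_sum]
        exact Finset.sum_le_sum fun h hh => (hc h hh).trans_eq (div_eq_mul_inv _ _)
    _ ≤ c₀ * (2 * (1 + Real.log n)) := by gcongr; exact sum_inv_abs_le_two_mul_one_add_log hS
    _ = 2 * c₀ * (1 + Real.log n) := by ring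

lemma sum_norm_sq_le_four_mul_sq_div {E : Type*} [SeminormedAddGroup E] {S : Finset ℤ}
    {c : ℤ → E} {c₀ : ℝ} {n : ℕ} (hn : 1 ≤ n) (hc : ∀ h ∈ S, ‖c h‖ ≤ c₀ / |(h : ℝ)|)
    (hS : ∀ h ∈ S, (n : ℝ) ≤ |(h : ℝ)|) :
    ∑ h ∈ S, ‖c h‖ ^ 2 ≤ 4 * c₀ ^ 2 / n := by
  calc ∑ h ∈ S, ‖c h‖ ^ 2 ≤ c₀ ^ 2 * ∑ h ∈ S, ((h : ℝ) ^ 2)⁻¹ := by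
        rw [Finset.mul_sum]
        refine Finset.sum_le_sum fun h hh => ?_
        calc ‖c h‖ ^ 2 ≤ (c₀ / |(h : ℝ)|) ^ 2 := pow_le_pow_left₀ (norm_nonneg _) (hc h hh) 2
          _ = c₀ ^ 2 * ((h : ℝ) ^ 2)⁻¹ := by rw [div_pow, sq_abs, div_eq_mul_inv]
    _ ≤ c₀ ^ 2 * (4 / n) := by gcongr; exact sum_inv_sq_le_four_div hn hS
    _ = 4 * c₀ ^ 2 / n := by ring

namespace Nat

lemma factorial_two_mul_eq (k : ℕ) : (2 * k)! = 2 ^ k * k ! * (2 * k - 1)‼ := by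
  cases k with
  | zero => rfl
  | succ k =>
    rw [show 2 * (k + 1) = (2 * k + 1) + 1 by ring, factorial_eq_mul_doubleFactorial,
      show 2 * k + 1 + 1 = 2 * (k + 1) by ring, doubleFactorial_two_mul]
    rfl

lemma doubleFactorial_two_mul_sub_one_le_pow (k : ℕ) : (2 * k - 1)‼ ≤ k ^ k := by
  have hdesc : k ! * (2 * k).descFactorial k = (2 * k)! := by
    simpa [show 2 * k - k = k by omega] using factorial_mul_descFactorial (show k ≤ 2 * k by omega)
  have : 2 ^ k * k ! * (2 * k - 1)‼ ≤ 2 ^ k * k ! * k ^ k := by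
    calc 2 ^ k * k ! * (2 * k - 1)‼ = k ! * (2 * k).descFactorial k := by
          rw [hdesc, factorial_two_mul_eq]
      _ ≤ k ! * (2 * k) ^ k := Nat.mul_le_mul_left _ (descFactorial_le_pow _ _)
      _ = 2 ^ k * k ! * k ^ k := by ring
  exact Nat.le_of_mul_le_mul_left this (by positivity)

lemma multinomial_two_mul_le {ι : Type*} (s : Finset ι) (β : ι → ℕ) :
    multinomial s (fun i => 2 * β i) ≤ (2 * ∑ i ∈ s, β i - 1)‼ * multinomial s β := by
  have hprod : 2 ^ (∑ i ∈ s, β i) * ∏ i ∈ s, (β i)! ≤ ∏ i ∈ s, (2 * β i)! := by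
    rw [← Finset.prod_pow_eq_pow_sum, ← Finset.prod_mul_distrib]
    exact Finset.prod_le_prod' fun i _ => by
      rw [factorial_two_mul_eq]
      exact Nat.le_mul_of_pos_right _ (doubleFactorial_pos _)
  refine Nat.le_of_mul_le_mul_left ?_ (Finset.prod_pos (s := s) fun i _ => factorial_pos (2 * β i))
  calc (∏ i ∈ s, (2 * β i)!) * multinomial s (fun i => 2 * β i)
      = (2 * ∑ i ∈ s, β i - 1)‼ * multinomial s β * (2 ^ (∑ i ∈ s, β i) * ∏ i ∈ s, (β i)!) := by
        rw [multinomial_spec, ← Finset.mul_sum, factorial_two_mul_eq, ← multinomial_spec s β]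
        ring
    _ ≤ (2 * ∑ i ∈ s, β i - 1)‼ * multinomial s β * ∏ i ∈ s, (2 * β i)! :=
        Nat.mul_le_mul_left _ hprod
    _ = (∏ i ∈ s, (2 * β i)!) * ((2 * ∑ i ∈ s, β i - 1)‼ * multinomial s β) := by ring

end Nat

lemma Finset.sum_piAntidiag_two_mul_of_odd_eq_zero {ι M : Type*} [DecidableEq ι]
    [AddCommMonoid M] (s : Finset ι) (k : ℕ) {T : (ι → ℕ) → M}
    (hT : ∀ n, (∃ i ∈ s, Odd (n i)) → T n = 0) :
    ∑ n ∈ s.piAntidiag (2 * k), T n = ∑ β ∈ s.piAntidiag k, T (fun i => 2 * β i) := by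
  refine (Finset.sum_of_injOn (fun (β : ι → ℕ) i => 2 * β i) ?_ ?_ ?_ fun _ _ => rfl).symm
  · intro β _ β' _ h
    funext i
    have := congrFun h i
    simp only at this
    omega
  · intro β hβ
    simp only [Finset.mem_coe, Finset.mem_piAntidiag] at hβ ⊢
    exact ⟨by rw [← Finset.mul_sum, hβ.1], fun i hi => hβ.2 i (by omega)⟩
  · intro n hn hnot
    rw [Finset.mem_piAntidiag] at hn
    refine hT n ?_
    by_contra! hodd
    refine hnot ⟨fun i => n i / 2, ?_, funext fun i => ?_⟩
    · simp only [Finset.mem_coe, Finset.mem_piAntidiag]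
      refine ⟨?_, fun i hi => hn.2 i (by omega)⟩
      have hsum : ∑ i ∈ s, n i = 2 * ∑ i ∈ s, n i / 2 := by
        rw [Finset.mul_sum]
        exact Finset.sum_congr rfl fun i hi => by have := hodd i hi; grind
      have : ∑ i ∈ s, n i = 2 * k := hn.1
      omega
    · by_cases hi : i ∈ s
      · have := hodd i hi; grind
      · have := mt (hn.2 i) hi; simp only; omega

section Moments

variable {Ω ι : Type*} [MeasurableSpace Ω] {μ : Measure Ω} {X : ι → Ω → ℝ} {N : ℝ}

lemma ProbabilityTheory.iIndepFun.integral_finset_prod_eq_prod_integral (hX : iIndepFun X μ)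
    (hmeas : ∀ i, AEStronglyMeasurable (X i) μ) (s : Finset ι) :
    ∫ ω, ∏ i ∈ s, X i ω ∂μ = ∏ i ∈ s, ∫ ω, X i ω ∂μ := by
  have := (hX.precomp (g := ((↑) : s → ι)) Subtype.val_injective).integral_fun_prod_eq_prod_integral
    fun i => hmeas i
  simp_rw [← Finset.prod_coe_sort s]
  exact this

lemma sq_integral_le_integral_sq [IsProbabilityMeasure μ] {f : Ω → ℝ} (hf : MemLp f 2 μ) :
    (∫ ω, f ω ∂μ) ^ 2 ≤ ∫ ω, f ω ^ 2 ∂μ := by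
  have := variance_nonneg f μ
  rw [variance_eq_sub hf] at this
  simpa using this

lemma integral_pow_le_of_ae_abs_le [IsProbabilityMeasure μ] {f : Ω → ℝ} {C : ℝ}
    (hf : ∀ᵐ ω ∂μ, |f ω| ≤ C) (m : ℕ) : ∫ ω, f ω ^ m ∂μ ≤ C ^ m := by
  refine (le_abs_self _).trans ?_
  simpa using norm_integral_le_of_norm_le_const (μ := μ) (f := fun ω => f ω ^ m)
    (hf.mono fun ω hω => by
      rw [Real.norm_eq_abs, abs_pow]; exact pow_le_pow_left₀ (abs_nonneg _) hω m)

lemma integral_norm_pow_le_of_ae_norm_le [IsProbabilityMeasure μ] {E : Type*}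
    [NormedAddCommGroup E] {f : Ω → E} {C : ℝ} (hf : ∀ᵐ ω ∂μ, ‖f ω‖ ≤ C) (k : ℕ) :
    ∫ ω, ‖f ω‖ ^ k ∂μ ≤ C ^ k := by
  calc ∫ ω, ‖f ω‖ ^ k ∂μ ≤ ∫ _, C ^ k ∂μ :=
        integral_mono_of_nonneg (.of_forall fun _ => by positivity) (integrable_const _)
          (hf.mono fun ω hω => pow_le_pow_left₀ (norm_nonneg _) hω k)
    _ = C ^ k := by simp

lemma integral_norm_add_pow_le_two_mul_pow {E : Type*} [NormedAddCommGroup E] {f g : Ω → E}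
    {k : ℕ} {W : ℝ} (hk : k ≠ 0) (hf : Integrable (fun ω => ‖f ω‖ ^ k) μ)
    (hg : Integrable (fun ω => ‖g ω‖ ^ k) μ) (hfW : ∫ ω, ‖f ω‖ ^ k ∂μ ≤ W ^ k)
    (hgW : ∫ ω, ‖g ω‖ ^ k ∂μ ≤ W ^ k) :
    ∫ ω, ‖f ω + g ω‖ ^ k ∂μ ≤ (2 * W) ^ k := by
  calc ∫ ω, ‖f ω + g ω‖ ^ k ∂μ ≤ ∫ ω, 2 ^ (k - 1) * (‖f ω‖ ^ k + ‖g ω‖ ^ k) ∂μ := by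
        refine integral_mono_of_nonneg (.of_forall fun _ => by positivity)
          ((hf.add hg).const_mul _) (.of_forall fun ω => ?_)
        exact (pow_le_pow_left₀ (norm_nonneg _) (norm_add_le _ _) k).trans
          (add_pow_le (norm_nonneg _) (norm_nonneg _) k)
    _ = 2 ^ (k - 1) * (∫ ω, ‖f ω‖ ^ k ∂μ + ∫ ω, ‖g ω‖ ^ k ∂μ) := by
        rw [integral_const_mul, integral_add hf hg]
    _ ≤ 2 ^ (k - 1) * (W ^ k + W ^ k) := by gcongr
    _ = (2 * W) ^ k := by
        rw [← two_mul, ← mul_assoc, ← pow_succ, Nat.sub_add_cancel (Nat.pos_of_ne_zero hk), mul_pow]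

lemma ae_norm_sum_mul_le (hbd : ∀ i, ∀ᵐ ω ∂μ, |X i ω| ≤ N) (s : Finset ι) (c : ι → ℂ) :
    ∀ᵐ ω ∂μ, ‖∑ i ∈ s, c i * (X i ω : ℂ)‖ ≤ (∑ i ∈ s, ‖c i‖) * N := by
  filter_upwards [(Filter.eventually_all_finset s).2 fun i _ => hbd i] with ω hω
  calc ‖∑ i ∈ s, c i * (X i ω : ℂ)‖ ≤ ∑ i ∈ s, ‖c i‖ * |X i ω| := by
        simpa using norm_sum_le s fun i => c i * (X i ω : ℂ)
    _ ≤ ∑ i ∈ s, ‖c i‖ * N := Finset.sum_le_sum fun i hi =>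
        mul_le_mul_of_nonneg_left (hω i hi) (norm_nonneg _)
    _ = (∑ i ∈ s, ‖c i‖) * N := (Finset.sum_mul _ _ _).symm

lemma memLp_top_norm_sum_mul_pow (hmeas : ∀ i, Measurable (X i))
    (hbd : ∀ i, ∀ᵐ ω ∂μ, |X i ω| ≤ N) (s : Finset ι) (c : ι → ℂ) (k : ℕ) :
    MemLp (fun ω => ‖∑ i ∈ s, c i * (X i ω : ℂ)‖ ^ k) ⊤ μ := by
  refine memLp_top_of_bound (by fun_prop) (((∑ i ∈ s, ‖c i‖) * N) ^ k) ?_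
  filter_upwards [ae_norm_sum_mul_le hbd s c] with ω hω
  simpa using pow_le_pow_left₀ (norm_nonneg _) hω k

end Moments

section EvenMoment

variable {Ω ι : Type*} [MeasurableSpace Ω] {μ : Measure Ω} [IsProbabilityMeasure μ]
  {X : ι → Ω → ℝ} {N : ℝ}

lemma integral_sum_mul_pow_eq [DecidableEq ι] (hmeas : ∀ i, Measurable (X i))
    (hind : iIndepFun X μ) (hbd : ∀ i, ∀ᵐ ω ∂μ, |X i ω| ≤ N) (s : Finset ι) (a : ι → ℝ)
    (m : ℕ) :
    ∫ ω, (∑ i ∈ s, a i * X i ω) ^ m ∂μ =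
      ∑ n ∈ s.piAntidiag m, Nat.multinomial s n * ∏ i ∈ s, a i ^ n i * ∫ ω, X i ω ^ n i ∂μ := by
  have hint (n : ι → ℕ) : Integrable (fun ω => ∏ i ∈ s, X i ω ^ n i) μ := by
    refine .of_bound (by fun_prop) (∏ i ∈ s, N ^ n i) ?_
    filter_upwards [(Filter.eventually_all_finset s).2 fun i _ => hbd i] with ω hω
    rw [Real.norm_eq_abs, Finset.abs_prod]
    exact Finset.prod_le_prod (fun _ _ => abs_nonneg _) fun i hi => by
      rw [abs_pow]; exact pow_le_pow_left₀ (abs_nonneg _) (hω i hi) _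
  have hind_pow (n : ι → ℕ) : iIndepFun (fun i ω => X i ω ^ n i) μ :=
    hind.comp (fun i x => x ^ n i) fun i => measurable_id.pow_const _
  simp_rw [Finset.sum_pow_eq_sum_piAntidiag, mul_pow, Finset.prod_mul_distrib, ← mul_assoc]
  rw [integral_finsetSum _ fun n _ => (hint n).const_mul _]
  refine Finset.sum_congr rfl fun n _ => ?_
  rw [integral_const_mul, (hind_pow n).integral_finset_prod_eq_prod_integral
    (fun i => ((hmeas i).pow_const _).aestronglyMeasurable)]

theorem integral_sum_mul_pow_two_mul_le_s10 (hmeas : ∀ i, Measurable (X i))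
    (hind : iIndepFun X μ) (hbd : ∀ i, ∀ᵐ ω ∂μ, |X i ω| ≤ N)
    (hodd : ∀ i (ℓ : ℕ), ∫ ω, X i ω ^ (2 * ℓ + 1) ∂μ = 0) (s : Finset ι) (a : ι → ℝ) (k : ℕ) :
    ∫ ω, (∑ i ∈ s, a i * X i ω) ^ (2 * k) ∂μ ≤ (2 * k - 1)‼ * (N ^ 2 * ∑ i ∈ s, a i ^ 2) ^ k := by
  classical
  obtain ⟨T, hT⟩ : ∃ T : (ι → ℕ) → ℝ, ∀ n,
      T n = Nat.multinomial s n * ∏ i ∈ s, a i ^ n i * ∫ ω, X i ω ^ n i ∂μ := ⟨_, fun _ => rfl⟩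
  have heven : ∑ n ∈ s.piAntidiag (2 * k), T n = ∑ β ∈ s.piAntidiag k, T (fun i => 2 * β i) :=
    s.sum_piAntidiag_two_mul_of_odd_eq_zero k fun n ⟨i, hi, ℓ, hℓ⟩ => by
      rw [hT]
      exact mul_eq_zero_of_right _ (Finset.prod_eq_zero hi (by rw [hℓ, hodd, mul_zero]))
  have hterm (β : ι → ℕ) (hβ : ∑ i ∈ s, β i = k) :
      T (fun i => 2 * β i) ≤
        (2 * k - 1)‼ * (Nat.multinomial s β * ∏ i ∈ s, (N ^ 2 * a i ^ 2) ^ β i) := by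
    have hmult : (Nat.multinomial s (fun i => 2 * β i) : ℝ) ≤
        (2 * k - 1)‼ * Nat.multinomial s β := by
      exact_mod_cast hβ ▸ Nat.multinomial_two_mul_le s β
    have hnonneg (i : ι) : 0 ≤ a i ^ (2 * β i) * ∫ ω, X i ω ^ (2 * β i) ∂μ :=
      mul_nonneg ((even_two_mul _).pow_nonneg _)
        (integral_nonneg fun ω => (even_two_mul _).pow_nonneg _)
    rw [hT, ← mul_assoc]
    refine mul_le_mul hmult (Finset.prod_le_prod (fun i _ => hnonneg i) fun i _ => ?_)
      (Finset.prod_nonneg fun i _ => hnonneg i) (by positivity)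
    rw [mul_pow, ← pow_mul, ← pow_mul, mul_comm (N ^ (2 * β i))]
    exact mul_le_mul_of_nonneg_left (integral_pow_le_of_ae_abs_le (hbd i) _)
      ((even_two_mul _).pow_nonneg _)
  calc ∫ ω, (∑ i ∈ s, a i * X i ω) ^ (2 * k) ∂μ = ∑ β ∈ s.piAntidiag k, T (fun i => 2 * β i) := by
        simp_rw [integral_sum_mul_pow_eq hmeas hind hbd, ← hT, heven]
    _ ≤ ∑ β ∈ s.piAntidiag k,
          (2 * k - 1)‼ * (Nat.multinomial s β * ∏ i ∈ s, (N ^ 2 * a i ^ 2) ^ β i) :=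
        Finset.sum_le_sum fun β hβ => hterm β (Finset.mem_piAntidiag.1 hβ).1
    _ = (2 * k - 1)‼ * (N ^ 2 * ∑ i ∈ s, a i ^ 2) ^ k := by
        rw [← Finset.mul_sum, Finset.mul_sum s, Finset.sum_pow_eq_sum_piAntidiag]

end EvenMoment

section Khintchine

variable {Ω ι : Type*} [MeasurableSpace Ω] {μ : Measure Ω} [IsProbabilityMeasure μ]
  {X : ι → Ω → ℝ} {N : ℝ}

theorem integral_norm_sum_mul_pow_two_mul_le_s10 (hmeas : ∀ i, Measurable (X i))
    (hind : iIndepFun X μ) (hbd : ∀ i, ∀ᵐ ω ∂μ, |X i ω| ≤ N)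
    (hodd : ∀ i (ℓ : ℕ), ∫ ω, X i ω ^ (2 * ℓ + 1) ∂μ = 0) (s : Finset ι) (c : ι → ℂ) (k : ℕ) :
    ∫ ω, ‖∑ i ∈ s, c i * (X i ω : ℂ)‖ ^ (2 * k) ∂μ ≤
      2 ^ k * (2 * k - 1)‼ * (N ^ 2 * ∑ i ∈ s, ‖c i‖ ^ 2) ^ k := by
  obtain rfl | hk := k.eq_zero_or_pos
  · simp
  set U := fun ω => ∑ i ∈ s, c i * (X i ω : ℂ)
  have hre (ω : Ω) : (U ω).re = ∑ i ∈ s, (c i).re * X i ω := by simp [U, Complex.re_sum]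
  have him (ω : Ω) : (U ω).im = ∑ i ∈ s, (c i).im * X i ω := by simp [U, Complex.im_sum]
  have hUint := (memLp_top_norm_sum_mul_pow hmeas hbd s c (2 * k)).integrable (μ := μ) le_top
  have hpart_int {f : ℂ → ℝ} (hf : ∀ z, |f z| ≤ ‖z‖) (hfm : Measurable f) :
      Integrable (fun ω => f (U ω) ^ (2 * k)) μ :=
    hUint.mono' ((hfm.comp (by fun_prop)).pow_const _).aestronglyMeasurable (.of_forall fun ω => by
      rw [Real.norm_eq_abs, abs_pow]; exact pow_le_pow_left₀ (abs_nonneg _) (hf _) _)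
  have hre_int := hpart_int Complex.abs_re_le_norm Complex.measurable_re
  have him_int := hpart_int Complex.abs_im_le_norm Complex.measurable_im
  have hmoment {a : ι → ℝ} (ha : ∀ i, |a i| ≤ ‖c i‖) :
      ∫ ω, (∑ i ∈ s, a i * X i ω) ^ (2 * k) ∂μ ≤
        (2 * k - 1)‼ * (N ^ 2 * ∑ i ∈ s, ‖c i‖ ^ 2) ^ k := by
    refine (integral_sum_mul_pow_two_mul_le_s10 hmeas hind hbd hodd s a k).trans ?_
    gcongr _ * (_ * ∑ i ∈ s, ?_) ^ k with i
    exact sq_le_sq' (abs_le.1 (ha i)).1 (abs_le.1 (ha i)).2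
  calc ∫ ω, ‖U ω‖ ^ (2 * k) ∂μ
      ≤ ∫ ω, 2 ^ (k - 1) * ((U ω).re ^ (2 * k) + (U ω).im ^ (2 * k)) ∂μ := by
        refine integral_mono_of_nonneg (.of_forall fun _ => by positivity)
          ((hre_int.add him_int).const_mul _) (.of_forall fun ω => ?_)
        simp only [pow_mul, Complex.sq_norm, Complex.normSq_apply, ← sq]
        exact add_pow_le (sq_nonneg _) (sq_nonneg _) k
    _ = 2 ^ (k - 1) * (∫ ω, (∑ i ∈ s, (c i).re * X i ω) ^ (2 * k) ∂μ +
          ∫ ω, (∑ i ∈ s, (c i).im * X i ω) ^ (2 * k) ∂μ) := by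
        rw [integral_const_mul, integral_add hre_int him_int]
        simp only [hre, him]
    _ ≤ 2 ^ (k - 1) * ((2 * k - 1)‼ * (N ^ 2 * ∑ i ∈ s, ‖c i‖ ^ 2) ^ k +
          (2 * k - 1)‼ * (N ^ 2 * ∑ i ∈ s, ‖c i‖ ^ 2) ^ k) := by
        gcongr
        · exact hmoment fun i => Complex.abs_re_le_norm _
        · exact hmoment fun i => Complex.abs_im_le_norm _
    _ = 2 ^ k * (2 * k - 1)‼ * (N ^ 2 * ∑ i ∈ s, ‖c i‖ ^ 2) ^ k := by
        rw [← two_mul, ← mul_assoc, ← pow_succ, Nat.sub_add_cancel hk, mul_assoc]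

theorem sq_integral_norm_sum_mul_pow_le (hmeas : ∀ i, Measurable (X i))
    (hind : iIndepFun X μ) (hbd : ∀ i, ∀ᵐ ω ∂μ, |X i ω| ≤ N)
    (hodd : ∀ i (ℓ : ℕ), ∫ ω, X i ω ^ (2 * ℓ + 1) ∂μ = 0) (s : Finset ι) (c : ι → ℂ) (k : ℕ) :
    (∫ ω, ‖∑ i ∈ s, c i * (X i ω : ℂ)‖ ^ k ∂μ) ^ 2 ≤ (2 * k * N ^ 2 * ∑ i ∈ s, ‖c i‖ ^ 2) ^ k := by
  calc (∫ ω, ‖∑ i ∈ s, c i * (X i ω : ℂ)‖ ^ k ∂μ) ^ 2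
      ≤ ∫ ω, ‖∑ i ∈ s, c i * (X i ω : ℂ)‖ ^ (2 * k) ∂μ := by
        simpa only [← pow_mul, mul_comm k 2] using sq_integral_le_integral_sq
          ((memLp_top_norm_sum_mul_pow hmeas hbd s c k).mono_exponent (μ := μ) le_top)
    _ ≤ 2 ^ k * (2 * k - 1)‼ * (N ^ 2 * ∑ i ∈ s, ‖c i‖ ^ 2) ^ k :=
        integral_norm_sum_mul_pow_two_mul_le_s10 hmeas hind hbd hodd s c k
    _ ≤ 2 ^ k * k ^ k * (N ^ 2 * ∑ i ∈ s, ‖c i‖ ^ 2) ^ k := by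
        gcongr
        exact_mod_cast Nat.doubleFactorial_two_mul_sub_one_le_pow k
    _ = (2 * k * N ^ 2 * ∑ i ∈ s, ‖c i‖ ^ 2) ^ k := by
        rw [← mul_pow, ← mul_pow]; ring

end Khintchine

section DecayingCoefficients

variable {Ω : Type*} [MeasurableSpace Ω] {μ : Measure Ω} [IsProbabilityMeasure μ]
  {X : ℤ → Ω → ℝ} {N c₀ : ℝ} {c : ℤ → ℂ} {S : Finset ℤ} {n : ℕ}

lemma integral_norm_sum_mul_pow_le_of_abs_le (hbd : ∀ h, ∀ᵐ ω ∂μ, |X h ω| ≤ N) (hN : 0 ≤ N)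
    (hc₀ : 0 ≤ c₀) (hc : ∀ h ∈ S, ‖c h‖ ≤ c₀ / |(h : ℝ)|)
    (hS : ∀ h ∈ S, 1 ≤ |(h : ℝ)| ∧ |(h : ℝ)| ≤ n) (k : ℕ) :
    ∫ ω, ‖∑ h ∈ S, c h * (X h ω : ℂ)‖ ^ k ∂μ ≤ (2 * c₀ * N * (1 + Real.log n)) ^ k := by
  refine integral_norm_pow_le_of_ae_norm_le ((ae_norm_sum_mul_le hbd S c).mono
    fun ω hω => hω.trans ?_) k
  calc (∑ h ∈ S, ‖c h‖) * N ≤ 2 * c₀ * (1 + Real.log n) * N :=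
        mul_le_mul_of_nonneg_right (sum_norm_le_two_mul_one_add_log hc₀ hc hS) hN
    _ = 2 * c₀ * N * (1 + Real.log n) := by ring

lemma integral_norm_sum_mul_pow_le_of_le_abs (hmeas : ∀ h, Measurable (X h))
    (hind : iIndepFun X μ) (hbd : ∀ h, ∀ᵐ ω ∂μ, |X h ω| ≤ N)
    (hodd : ∀ h (ℓ : ℕ), ∫ ω, X h ω ^ (2 * ℓ + 1) ∂μ = 0) (hN : 0 ≤ N) (hc₀ : 0 ≤ c₀)
    (hc : ∀ h ∈ S, ‖c h‖ ≤ c₀ / |(h : ℝ)|) (hn : 1 ≤ n) (hS : ∀ h ∈ S, (n : ℝ) ≤ |(h : ℝ)|) :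
    ∫ ω, ‖∑ h ∈ S, c h * (X h ω : ℂ)‖ ^ n ∂μ ≤ (3 * c₀ * N) ^ n := by
  have hn' : (0 : ℝ) < n := by exact_mod_cast hn
  refine (pow_le_pow_iff_left₀ (integral_nonneg fun _ => by positivity) (by positivity)
    two_ne_zero).1 ?_
  calc (∫ ω, ‖∑ h ∈ S, c h * (X h ω : ℂ)‖ ^ n ∂μ) ^ 2
      ≤ (2 * n * N ^ 2 * ∑ h ∈ S, ‖c h‖ ^ 2) ^ n :=
        sq_integral_norm_sum_mul_pow_le hmeas hind hbd hodd S c n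
    _ ≤ (2 * n * N ^ 2 * (4 * c₀ ^ 2 / n)) ^ n := by
        gcongr; exact sum_norm_sq_le_four_mul_sq_div hn hc hS
    _ ≤ ((3 * c₀ * N) ^ 2) ^ n := by
        refine pow_le_pow_left₀ (by positivity) ?_ n
        field_simp
        nlinarith [sq_nonneg (c₀ * N)]
    _ = ((3 * c₀ * N) ^ n) ^ 2 := by rw [← pow_mul, ← pow_mul, mul_comm 2 n]

end DecayingCoefficients

theorem moment_bound_small_y_general
    {Ω : Type*} [MeasureSpace Ω] [IsProbabilityMeasure (ℙ : Measure Ω)]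
    (N c₀ : ℝ) (hN : 0 < N) (hc₀ : 0 < c₀)
    (X : ℤ → Ω → ℝ)
    (hmeas : ∀ h, Measurable (X h))
    (hind : iIndepFun X)
    (hbd : ∀ h : ℤ, ∀ᵐ ω, |X h ω| ≤ N)
    (hodd : ∀ h : ℤ, ∀ ℓ : ℕ, ∫ ω, (X h ω) ^ (2 * ℓ + 1) = 0)
    (c : ℤ → ℂ) (hc : ∀ h : ℤ, h ≠ 0 → ‖c h‖ ≤ c₀ / |(h : ℝ)|)
    (y z : ℝ) (hy : 1 ≤ y) (k : ℕ) (hky : y < k) :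
    ∫ ω, ‖(∑ h ∈ (Finset.Icc (-⌈z⌉ : ℤ) ⌈z⌉).filter
          (fun h : ℤ => y ≤ |(h : ℝ)| ∧ |(h : ℝ)| < z),
        c h * (X h ω : ℂ))‖ ^ k
      ≤ (10 * c₀ * N * Real.log k) ^ k := by
  set F := (Finset.Icc (-⌈z⌉ : ℤ) ⌈z⌉).filter (fun h : ℤ => y ≤ |(h : ℝ)| ∧ |(h : ℝ)| < z)
  set Fhead := F.filter (fun h : ℤ => |(h : ℝ)| < k)
  set Ftail := F.filter (fun h : ℤ => ¬ |(h : ℝ)| < k)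
  have hk : 2 ≤ k := by exact_mod_cast (show (1 : ℝ) < k by linarith)
  have hL : 2 / 3 < Real.log k := by
    linarith [Real.log_two_gt_d9, Real.log_le_log two_pos (show (2 : ℝ) ≤ k by exact_mod_cast hk)]
  have hF (h : ℤ) (hh : h ∈ F) : 1 ≤ |(h : ℝ)| := hy.trans (Finset.mem_filter.1 hh).2.1
  have hcF (h : ℤ) (hh : h ∈ F) : ‖c h‖ ≤ c₀ / |(h : ℝ)| :=
    hc h fun h0 => by have := hF h hh; norm_num [h0] at this
  have hhead := integral_norm_sum_mul_pow_le_of_abs_le (S := Fhead) (n := k) hbd hN.le hc₀.le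
    (fun h hh => hcF h (Finset.mem_filter.1 hh).1)
    (fun h hh => ⟨hF h (Finset.mem_filter.1 hh).1, (Finset.mem_filter.1 hh).2.le⟩) k
  have htail := integral_norm_sum_mul_pow_le_of_le_abs (S := Ftail) hmeas hind hbd hodd hN.le
    hc₀.le (fun h hh => hcF h (Finset.mem_filter.1 hh).1) (by omega : 1 ≤ k)
    fun h hh => not_lt.1 (Finset.mem_filter.1 hh).2
  have hc₀N := mul_pos hc₀ hN
  calc ∫ ω, ‖∑ h ∈ F, c h * (X h ω : ℂ)‖ ^ k
      = ∫ ω, ‖(∑ h ∈ Fhead, c h * (X h ω : ℂ)) + ∑ h ∈ Ftail, c h * (X h ω : ℂ)‖ ^ k := by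
        simp only [Fhead, Ftail, Finset.sum_filter_add_sum_filter_not]
    _ ≤ (2 * (5 * c₀ * N * Real.log k)) ^ k := by
        refine integral_norm_add_pow_le_two_mul_pow (by omega) ?_ ?_
          (hhead.trans (pow_le_pow_left₀ (by positivity) (by nlinarith) k))
          (htail.trans (pow_le_pow_left₀ (by positivity) (by nlinarith) k))
        all_goals exact (memLp_top_norm_sum_mul_pow hmeas hbd _ c k).integrable le_top
    _ = (10 * c₀ * N * Real.log k) ^ k := by ring

theorem moment_bound_small_y
    {Ω : Type*} [MeasureSpace Ω] [IsProbabilityMeasure (ℙ : Measure Ω)]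
    (N c₀ : ℝ) (hN : 0 < N) (hc₀ : 0 < c₀)
    (X : ℤ → Ω → ℝ)
    (hmeas : ∀ h, Measurable (X h))
    (hind : iIndepFun X)
    (hid : ∀ h h' : ℤ, IdentDistrib (X h) (X h'))
    (hbd : ∀ h : ℤ, ∀ᵐ ω, |X h ω| ≤ N)
    (hodd : ∀ h : ℤ, ∀ ℓ : ℕ, ∫ ω, (X h ω) ^ (2 * ℓ + 1) = 0)
    (c : ℤ → ℂ) (hc : ∀ h : ℤ, h ≠ 0 → ‖c h‖ ≤ c₀ / |(h : ℝ)|)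
    (y z : ℝ) (hy : 1 ≤ y) (hyz : y < z) (k : ℕ) (hk : 1 ≤ k) (hky : y < k) :
    ∫ ω, ‖(∑ h ∈ (Finset.Icc (-⌈z⌉ : ℤ) ⌈z⌉).filter
          (fun h : ℤ => y ≤ |(h : ℝ)| ∧ |(h : ℝ)| < z),
        c h * (X h ω : ℂ))‖ ^ k
      ≤ (10 * c₀ * N * Real.log k) ^ k :=
  moment_bound_small_y_general N c₀ hN hc₀ X hmeas hind hbd hodd c hc y z hy k hky
end

section
/- Let X be a real random variable with values in [−N, N], E(X) = 0, and P(X > N − ε) ≥ c·ε^A for all ε ∈ (0,1]. Then there is a constant C (depending on c, A, N) such that for all t > 1: N − C·log(2t)/t ≤ E(X e^{tX})/E(e^{tX}) ≤ N. -/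
/-!
Write `D = E[e^{tX}]` and `M = E[X e^{tX}]`, so that `N - M / D = E[(N - X) e^{tX}] / D`.
Splitting according to whether `N - X ≤ η`, the numerator is at most `η D + 2N e^{t(N - η)}`,
while `D ≥ P(X > N - δ) e^{t(N - δ)} ≥ c δ^A e^{t(N - δ)}`. With `δ = log(2t)/t` and
`η = (A + 2) δ` the ratio `e^{t(N - η)} / e^{t(N - δ)} = (2t)^{-(A+1)}` beats `δ^A`,
and the error term is `O(δ)`.
-/

open MeasureTheory ProbabilityTheory Real Set

lemma log_two_mul_le_self {t : ℝ} (ht : 0 < t) : log (2 * t) ≤ t := by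
  rw [log_mul two_ne_zero ht.ne']
  linarith [log_le_sub_one_of_pos ht, log_two_lt_d9]

lemma exp_neg_mul_log_two_mul_le {s t : ℝ} (hs : 0 ≤ s) (ht : 1 < t) :
    exp (-(s * log (2 * t))) ≤ (log (2 * t) / t) ^ s / (2 * log 2) ^ s := by
  have h2t : 0 < 2 * t := by linarith
  have hlog : log 2 ≤ log (2 * t) := log_le_log two_pos (by linarith)
  have hlog2 := log_pos one_lt_two
  have : 0 ≤ log (2 * t) / t := div_nonneg (by linarith) (by linarith)
  rw [← div_rpow (by positivity) (by positivity), ← neg_mul, mul_comm, ← rpow_def_of_pos h2t,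
    rpow_neg h2t.le, ← inv_rpow h2t.le]
  refine rpow_le_rpow (by positivity) ?_ hs
  rw [div_div, inv_eq_one_div, div_le_div_iff₀ h2t (by positivity)]
  nlinarith

lemma sub_mul_exp_le {a b t η x : ℝ} (hx : x ∈ Icc a b) (ht : 0 ≤ t) (hη : 0 ≤ η) :
    (b - x) * exp (t * x) ≤ η * exp (t * x) + (b - a) * exp (t * (b - η)) := by
  rcases le_or_gt (b - x) η with hnear | hfar
  · have : 0 ≤ (b - a) * exp (t * (b - η)) := by nlinarith [hx.1, hx.2, exp_pos (t * (b - η))]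
    nlinarith [exp_pos (t * x)]
  · have hexp : exp (t * x) ≤ exp (t * (b - η)) := exp_le_exp.2 (by nlinarith)
    have : (b - x) * exp (t * x) ≤ (b - a) * exp (t * (b - η)) :=
      mul_le_mul (by linarith [hx.1]) hexp (exp_pos _).le (by linarith [hx.1, hx.2])
    nlinarith [exp_pos (t * x)]

variable {Ω : Type*} {mΩ : MeasurableSpace Ω} {μ : Measure Ω} {X : Ω → ℝ} {a b t : ℝ}

lemma integrable_mul_exp_mul_of_mem_Icc [IsFiniteMeasure μ] (hX : AEMeasurable X μ)
    (hab : ∀ᵐ ω ∂μ, X ω ∈ Icc a b) : Integrable (fun ω ↦ X ω * exp (t * X ω)) μ :=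
  (integrable_exp_mul_of_mem_Icc hX hab).bdd_mul hX.aestronglyMeasurable (c := max |a| |b|)
    (by filter_upwards [hab] with ω hω using abs_le_max_abs_abs hω.1 hω.2)

lemma integral_sub_mul_exp_mul_eq [IsFiniteMeasure μ] (hX : AEMeasurable X μ)
    (hab : ∀ᵐ ω ∂μ, X ω ∈ Icc a b) :
    ∫ ω, (b - X ω) * exp (t * X ω) ∂μ = b * mgf X μ t - ∫ ω, X ω * exp (t * X ω) ∂μ := by
  simp_rw [sub_mul]
  rw [integral_sub ((integrable_exp_mul_of_mem_Icc hX hab).const_mul b)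
    (integrable_mul_exp_mul_of_mem_Icc hX hab), integral_const_mul, mgf]

lemma integral_sub_mul_exp_mul_le [IsProbabilityMeasure μ] (hX : AEMeasurable X μ)
    (hab : ∀ᵐ ω ∂μ, X ω ∈ Icc a b) (ht : 0 ≤ t) {η : ℝ} (hη : 0 ≤ η) :
    ∫ ω, (b - X ω) * exp (t * X ω) ∂μ ≤ η * mgf X μ t + (b - a) * exp (t * (b - η)) := by
  have hint := integrable_exp_mul_of_mem_Icc (t := t) hX hab
  calc ∫ ω, (b - X ω) * exp (t * X ω) ∂μ
      ≤ ∫ ω, (η * exp (t * X ω) + (b - a) * exp (t * (b - η))) ∂μ := by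
        refine integral_mono_ae ?_ ((hint.const_mul η).add (integrable_const _)) ?_
        · simp_rw [sub_mul]
          exact (hint.const_mul b).sub (integrable_mul_exp_mul_of_mem_Icc hX hab)
        · filter_upwards [hab] with ω hω using sub_mul_exp_le hω ht hη
    _ = η * mgf X μ t + (b - a) * exp (t * (b - η)) := by
        rw [integral_add (hint.const_mul η) (integrable_const _), integral_const_mul,
          integral_const, probReal_univ, one_smul, mgf]

lemma measureReal_lt_mul_exp_le_mgf [IsFiniteMeasure μ] (ht : 0 ≤ t)
    (hint : Integrable (fun ω ↦ exp (t * X ω)) μ) :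
    μ.real {ω | a < X ω} * exp (t * a) ≤ mgf X μ t := by
  have hmono : μ.real {ω | a < X ω} ≤ μ.real {ω | a ≤ X ω} :=
    measureReal_mono fun ω (hω : a < X ω) ↦ hω.le
  calc μ.real {ω | a < X ω} * exp (t * a) ≤ exp (-t * a) * mgf X μ t * exp (t * a) := by
        gcongr; exact hmono.trans (measure_ge_le_exp_mul_mgf a ht hint)
    _ = mgf X μ t := by rw [mul_right_comm, ← exp_add]; simp

lemma integral_mul_exp_mul_div_mgf_le [IsProbabilityMeasure μ] (hX : AEMeasurable X μ)
    (hab : ∀ᵐ ω ∂μ, X ω ∈ Icc a b) :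
    (∫ ω, X ω * exp (t * X ω) ∂μ) / mgf X μ t ≤ b := by
  have hD := mgf_pos (integrable_exp_mul_of_mem_Icc (t := t) hX hab)
  have hdiff := integral_sub_mul_exp_mul_eq (t := t) hX hab
  have : 0 ≤ ∫ ω, (b - X ω) * exp (t * X ω) ∂μ :=
    integral_nonneg_of_ae <| by
      filter_upwards [hab] with ω hω using mul_nonneg (by linarith [hω.2]) (exp_pos _).le
  rw [div_le_iff₀ hD]
  linarith

lemma sub_integral_mul_exp_mul_div_mgf_le [IsProbabilityMeasure μ] (hX : AEMeasurable X μ)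
    (hab : ∀ᵐ ω ∂μ, X ω ∈ Icc a b) (ht : 0 ≤ t) {δ η : ℝ} (hη : 0 ≤ η)
    (hp : 0 < μ.real {ω | b - δ < X ω}) :
    b - (∫ ω, X ω * exp (t * X ω) ∂μ) / mgf X μ t
      ≤ η + (b - a) * exp (-t * (η - δ)) / μ.real {ω | b - δ < X ω} := by
  have hint := integrable_exp_mul_of_mem_Icc (t := t) hX hab
  have hD := mgf_pos hint
  have hlow := measureReal_lt_mul_exp_le_mgf (a := b - δ) ht hint
  have hba : 0 ≤ b - a := by
    obtain ⟨ω, hω⟩ := hab.exists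
    linarith [hω.1, hω.2]
  calc b - (∫ ω, X ω * exp (t * X ω) ∂μ) / mgf X μ t
      = (∫ ω, (b - X ω) * exp (t * X ω) ∂μ) / mgf X μ t := by
        rw [integral_sub_mul_exp_mul_eq hX hab, sub_div, mul_div_cancel_right₀ _ hD.ne']
    _ ≤ (η * mgf X μ t + (b - a) * exp (t * (b - η))) / mgf X μ t := by
        gcongr; exact integral_sub_mul_exp_mul_le hX hab ht hη
    _ = η + (b - a) * exp (t * (b - η)) / mgf X μ t := by field_simp
    _ ≤ η + (b - a) * exp (t * (b - η)) / (μ.real {ω | b - δ < X ω} * exp (t * (b - δ))) := by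
        gcongr
    _ = η + (b - a) * exp (-t * (η - δ)) / μ.real {ω | b - δ < X ω} := by
        rw [div_mul_eq_div_div, div_right_comm, mul_div_assoc, ← exp_sub]
        ring_nf

theorem tilted_mean_bound (A c N : ℝ) (hA : 0 < A) (hc : 0 < c) (hN : 0 < N) :
    ∃ C : ℝ, 0 < C ∧
      ∀ (Ω : Type) (mΩ : MeasurableSpace Ω) (μ : Measure Ω),
        IsProbabilityMeasure μ →
        ∀ X : Ω → ℝ, Measurable X →
        (∀ᵐ ω ∂μ, X ω ∈ Set.Icc (-N) N) →
        (∫ ω, X ω ∂μ) = 0 →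
        (∀ ε ∈ Set.Ioc (0 : ℝ) 1, c * ε ^ A ≤ (μ {ω | N - ε < X ω}).toReal) →
        ∀ t : ℝ, 1 < t →
          N - C * Real.log (2 * t) / t ≤
              (∫ ω, X ω * Real.exp (t * X ω) ∂μ) / (∫ ω, Real.exp (t * X ω) ∂μ) ∧
          (∫ ω, X ω * Real.exp (t * X ω) ∂μ) / (∫ ω, Real.exp (t * X ω) ∂μ) ≤ N := by
  set K := 2 * N / (c * (2 * log 2) ^ (A + 1)) with hK
  have hlog2 := log_pos one_lt_two
  refine ⟨A + 2 + K, by positivity, ?_⟩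
  intro Ω _ μ _ X hX hbound _ hsmall t ht
  have ht0 : 0 < t := by linarith
  set δ := log (2 * t) / t with hδ_def
  have hδ : δ ∈ Ioc 0 1 :=
    ⟨div_pos (log_pos (by linarith)) ht0, (div_le_one ht0).2 (log_two_mul_le_self ht0)⟩
  have hp : c * δ ^ A ≤ μ.real {ω | N - δ < X ω} := hsmall δ hδ
  have hδA : 0 < δ ^ A := rpow_pos_of_pos hδ.1 A
  have hp0 : 0 < c * δ ^ A := mul_pos hc hδA
  have hexp : -t * ((A + 2) * δ - δ) = -((A + 1) * log (2 * t)) := by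
    rw [hδ_def]; field_simp; ring
  have htail : (N - -N) * exp (-t * ((A + 2) * δ - δ)) / μ.real {ω | N - δ < X ω} ≤ K * δ := by
    calc _ ≤ 2 * N * (δ ^ (A + 1) / (2 * log 2) ^ (A + 1)) / (c * δ ^ A) := by
          rw [hexp, show N - -N = 2 * N by ring]
          have := hδ.1
          gcongr
          exact exp_neg_mul_log_two_mul_le (s := A + 1) (by linarith) ht
      _ = K * δ := by
          rw [rpow_add_one hδ.1.ne', hK]
          field_simp
  have hdeficit := sub_integral_mul_exp_mul_div_mgf_le hX.aemeasurable hbound ht0.le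
    (η := (A + 2) * δ) (mul_nonneg (by linarith) hδ.1.le) (hp0.trans_le hp)
  refine ⟨?_, integral_mul_exp_mul_div_mgf_le hX.aemeasurable hbound⟩
  have : (A + 2 + K) * log (2 * t) / t = (A + 2 + K) * δ := by rw [hδ_def]; ring
  simp only [mgf] at hdeficit
  linarith
end

section
/- Let m ≥ 2, and for −m/2 < h ≤ m/2 with h ≠ 0 define γ_m(h) = −(1/m)·Im ∑_{0≤n≤m/2} e(nh/m). Then γ_m(h) = O(1/m) if h is even, and γ_m(h) = −1/(πh) + O(1/m) if h is odd, with an absolute implied constant. -/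
open Real

open scoped Complex

/-!
With `θ = π h / m` and `q = e^{2iθ}` the sum is geometric, `(q^{N+1} - 1) / (q - 1)` with
`N = ⌊m/2⌋`. Since `2θ(N+1)` lies within `2|θ|` of `π h`, replacing `q^{N+1}` by `e^{iπh} = (-1)^h`
costs at most `2|θ| / |q - 1| ≤ π/2`, because `|q - 1| = 2|sin θ| ≥ 4|θ|/π`. What remains is
`((-1)^h - 1) Im (q - 1)⁻¹ = -((-1)^h - 1) cot θ / 2`, and `cot θ = 1/θ + O(1)` for `|θ| ≤ π/2`
turns this, after dividing by `-m`, into `((-1)^h - 1) / (2πh) + O(1/m)`.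
-/

lemma norm_cexp_mul_I_sub_cexp_mul_I_le (a b : ℝ) :
    ‖cexp (a * Complex.I) - cexp (b * Complex.I)‖ ≤ |a - b| := by
  have hfactor : cexp (a * Complex.I) - cexp (b * Complex.I) =
      cexp (b * Complex.I) * (cexp (Complex.I * ↑(a - b)) - 1) := by
    rw [mul_sub, mul_one, ← Complex.exp_add]; push_cast; ring_nf
  rw [hfactor, norm_mul, Complex.norm_exp_ofReal_mul_I, one_mul]
  exact norm_exp_I_mul_ofReal_sub_one_le

lemma mul_abs_le_norm_cexp_two_mul_I_sub_one {θ : ℝ} (hθ : |θ| ≤ π / 2) :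
    4 / π * |θ| ≤ ‖cexp (2 * θ * Complex.I) - 1‖ := by
  have hnorm : ‖cexp (2 * θ * Complex.I) - 1‖ = 2 * |sin θ| := by
    rw [mul_comm _ Complex.I, ← Complex.ofReal_ofNat, ← Complex.ofReal_mul,
      Complex.norm_exp_I_mul_ofReal_sub_one, norm_mul, Real.norm_eq_abs, Real.norm_eq_abs]
    norm_num
  calc 4 / π * |θ| = 2 * (2 / π * |θ|) := by ring
    _ ≤ 2 * |sin θ| := by gcongr; exact Real.mul_abs_le_abs_sin hθ
    _ = _ := hnorm.symm

lemma im_inv_cexp_two_mul_I_sub_one (θ : ℝ) :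
    (cexp (2 * θ * Complex.I) - 1)⁻¹.im = -cot θ / 2 := by
  have hcast : (2 * θ * Complex.I : ℂ) = ((2 * θ : ℝ) : ℂ) * Complex.I := by push_cast; ring
  rw [hcast, Complex.inv_im, Complex.normSq_apply, Complex.sub_re, Complex.sub_im,
    Complex.exp_ofReal_mul_I_re, Complex.exp_ofReal_mul_I_im, Complex.one_re, Complex.one_im,
    Real.cot_eq_cos_div_sin, cos_two_mul', sin_two_mul]
  have hpyth := sin_sq_add_cos_sq θ
  rcases eq_or_ne (sin θ) 0 with hs | hs
  · simp [hs]
  · have hnormSq : (cos θ ^ 2 - sin θ ^ 2 - 1) * (cos θ ^ 2 - sin θ ^ 2 - 1) +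
        (2 * sin θ * cos θ - 0) * (2 * sin θ * cos θ - 0) = 4 * sin θ ^ 2 := by
      linear_combination (sin θ ^ 2 + cos θ ^ 2 - 1) * hpyth
    rw [hnormSq]
    field_simp
    ring

lemma abs_inv_sub_cot_le_two_of_pos {x : ℝ} (h0 : 0 < x) (hx : x ≤ π / 2) :
    |x⁻¹ - cot x| ≤ 2 := by
  have hsin : 0 < sin x := sin_pos_of_pos_of_lt_pi h0 (by linarith [pi_pos])
  have hcot : x⁻¹ - cot x = (sin x - x * cos x) / (x * sin x) := by
    rw [Real.cot_eq_cos_div_sin]; field_simp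
  have hlower : x * cos x ≤ sin x := by
    rcases hx.lt_or_eq with hx | rfl
    · have hcos : 0 < cos x := cos_pos_of_mem_Ioo ⟨by linarith, hx⟩
      have := Real.le_tan h0.le hx
      rwa [tan_eq_sin_div_cos, le_div_iff₀ hcos] at this
    · simp
  have hupper : sin x - x * cos x ≤ x ^ 3 / 2 := by
    nlinarith [sin_le h0.le, one_sub_sq_div_two_le_cos (x := x)]
  have hden : 2 / π * x ^ 2 ≤ x * sin x := by
    nlinarith [mul_le_sin h0.le hx]
  rw [hcot, abs_of_nonneg (div_nonneg (by linarith) (by positivity)),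
    div_le_iff₀ (by positivity)]
  calc sin x - x * cos x ≤ x ^ 3 / 2 := hupper
    _ ≤ 2 * (2 / π * x ^ 2) := by
      rw [div_mul_eq_mul_div, ← mul_div_assoc, le_div_iff₀ pi_pos]
      nlinarith [pi_le_four, pi_pos]
    _ ≤ 2 * (x * sin x) := by gcongr

lemma abs_inv_sub_cot_le_two {x : ℝ} (hx : |x| ≤ π / 2) : |x⁻¹ - cot x| ≤ 2 := by
  rcases lt_trichotomy x 0 with hneg | rfl | hpos
  · have := abs_inv_sub_cot_le_two_of_pos (neg_pos.2 hneg) (by rwa [abs_of_neg hneg] at hx)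
    rwa [Real.cot_eq_cos_div_sin, cos_neg, sin_neg, inv_neg, div_neg, ← neg_add', abs_neg,
      ← sub_eq_add_neg, ← Real.cot_eq_cos_div_sin] at this
  · simp [Real.cot_eq_cos_div_sin]
  · exact abs_inv_sub_cot_le_two_of_pos hpos (by rwa [abs_of_pos hpos] at hx)

lemma norm_geom_sum_cexp_sub_le {θ φ : ℝ} (N : ℕ) (hθ0 : θ ≠ 0) (hθ : |θ| ≤ π / 2)
    (hφ : |2 * θ * (N + 1) - φ| ≤ 2 * |θ|) :
    ‖∑ n ∈ Finset.range (N + 1), cexp (2 * θ * Complex.I) ^ n -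
        (cexp (φ * Complex.I) - 1) / (cexp (2 * θ * Complex.I) - 1)‖ ≤ π / 2 := by
  set q := cexp (2 * θ * Complex.I)
  have hq : 4 / π * |θ| ≤ ‖q - 1‖ := mul_abs_le_norm_cexp_two_mul_I_sub_one hθ
  have hq0 : 0 < ‖q - 1‖ := lt_of_lt_of_le (by positivity) hq
  have hpow : q ^ (N + 1) = cexp ((2 * θ * (N + 1) : ℝ) * Complex.I) := by
    rw [← Complex.exp_nat_mul]; push_cast; ring_nf
  rw [geom_sum_eq (by simpa [sub_eq_zero] using hq0.ne'), ← sub_div, sub_sub_sub_cancel_right,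
    hpow, norm_div, div_le_iff₀ hq0]
  calc _ ≤ |2 * θ * (N + 1) - φ| := norm_cexp_mul_I_sub_cexp_mul_I_le _ _
    _ ≤ 2 * |θ| := hφ
    _ = π / 2 * (4 / π * |θ|) := by field_simp; ring
    _ ≤ π / 2 * ‖q - 1‖ := by gcongr

lemma abs_im_geom_sum_cexp_add_le {θ φ : ℝ} (N : ℕ) (hθ0 : θ ≠ 0) (hθ : |θ| ≤ π / 2)
    (hφ : |2 * θ * (N + 1) - φ| ≤ 2 * |θ|) {ε : ℝ} (hε : cexp (φ * Complex.I) = ε) :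
    |(∑ n ∈ Finset.range (N + 1), cexp (2 * θ * Complex.I) ^ n).im + (ε - 1) * cot θ / 2| ≤
      π / 2 := by
  have hmain : (((ε : ℂ) - 1) / (cexp (2 * θ * Complex.I) - 1)).im = -((ε - 1) * cot θ / 2) := by
    rw [div_eq_mul_inv, show (ε : ℂ) - 1 = ((ε - 1 : ℝ) : ℂ) by push_cast; rfl,
      Complex.im_ofReal_mul, im_inv_cexp_two_mul_I_sub_one]
    ring
  rw [← sub_neg_eq_add, ← hmain, ← Complex.sub_im, ← hε]
  exact (Complex.abs_im_le_norm _).trans (norm_geom_sum_cexp_sub_le N hθ0 hθ hφ)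

lemma nat_div_two_add_one_sub_half_mem_Ioc (m : ℕ) :
    ((m / 2 : ℕ) : ℝ) + 1 - m / 2 ∈ Set.Ioc 0 1 := by
  have hlo : (m : ℝ) < 2 * (m / 2 : ℕ) + 2 := by exact_mod_cast (by omega : m < 2 * (m / 2) + 2)
  have hhi : (2 * (m / 2 : ℕ) : ℝ) ≤ m := by exact_mod_cast (by omega : 2 * (m / 2) ≤ m)
  constructor <;> linarith

noncomputable def gammaM (m : ℕ) (h : ℤ) : ℝ :=
  -(1 / (m : ℝ)) * (∑ n ∈ Finset.range (m / 2 + 1),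
    Complex.exp (2 * (π : ℂ) * Complex.I * (n : ℂ) * (h : ℂ) / (m : ℂ))).im

lemma gammaM_eq_im_geom_sum (m : ℕ) (h : ℤ) :
    gammaM m h = -(1 / (m : ℝ)) *
      (∑ n ∈ Finset.range (m / 2 + 1), cexp (2 * (π * h / m : ℝ) * Complex.I) ^ n).im := by
  have hterm (n : ℕ) : cexp (2 * π * Complex.I * n * h / m) =
      cexp (2 * (π * h / m : ℝ) * Complex.I) ^ n := by
    rw [← Complex.exp_nat_mul]; push_cast; ring_nf
  simp only [gammaM, hterm]

lemma cexp_pi_mul_intCast_mul_I (h : ℤ) : cexp ((π * h : ℝ) * Complex.I) = ((-1 : ℝ) ^ h : ℝ) := by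
  rw [show ((π * h : ℝ) * Complex.I : ℂ) = h * (π * Complex.I) by push_cast; ring,
    Complex.exp_int_mul, Complex.exp_pi_mul_I]
  push_cast; rfl

lemma abs_gammaM_sub_le {m : ℕ} {h : ℤ} (h0 : h ≠ 0) (hh : |(h : ℝ)| ≤ m / 2) :
    |gammaM m h - ((-1 : ℝ) ^ h - 1) / (2 * π * h)| ≤ 4 / m := by
  have hh1 : (1 : ℝ) ≤ |(h : ℝ)| := by rw [← Int.cast_abs]; exact_mod_cast Int.one_le_abs h0
  have hm : (0 : ℝ) < m := by linarith
  set θ := π * h / m with hθdef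
  have hθ0 : θ ≠ 0 := by positivity
  have hθ : |θ| ≤ π / 2 := by
    rw [abs_div, abs_mul, abs_of_pos pi_pos, Nat.abs_cast, div_le_iff₀ hm]
    nlinarith [pi_pos]
  have hφ : |2 * θ * ((m / 2 : ℕ) + 1) - π * h| ≤ 2 * |θ| := by
    obtain ⟨hpos, hle⟩ := nat_div_two_add_one_sub_half_mem_Ioc m
    rw [show 2 * θ * ((m / 2 : ℕ) + 1) - π * h = 2 * θ * ((m / 2 : ℕ) + 1 - m / 2) by
      rw [hθdef]; field_simp, abs_mul, abs_mul, abs_two, abs_of_pos hpos]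
    nlinarith [abs_nonneg θ]
  set ε : ℝ := (-1) ^ h
  have hsum := abs_im_geom_sum_cexp_add_le (m / 2) hθ0 hθ (by exact_mod_cast hφ)
    (cexp_pi_mul_intCast_mul_I h)
  have hε : |ε - 1| ≤ 2 := by
    rcases Int.even_or_odd h with he | ho
    · simp [ε, he.neg_one_zpow]
    · norm_num [ε, ho.neg_one_zpow]
  set S := ∑ n ∈ Finset.range (m / 2 + 1), cexp (2 * θ * Complex.I) ^ n
  have hsplit : -(1 / m) * S.im - (ε - 1) / (2 * π * h) =
      -(1 / m) * (S.im + (ε - 1) * cot θ / 2) + (ε - 1) / (2 * m) * (cot θ - θ⁻¹) := by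
    rw [hθdef]
    field_simp
    ring
  have hE : |-(1 / m) * (S.im + (ε - 1) * cot θ / 2)| ≤ π / 2 / m := by
    rw [abs_mul, abs_neg, abs_of_pos (by positivity), one_div_mul_eq_div]
    gcongr
  have hC : |(ε - 1) / (2 * m) * (cot θ - θ⁻¹)| ≤ 2 / m := by
    rw [abs_mul, abs_div, abs_of_pos (by positivity : (0 : ℝ) < 2 * m), abs_sub_comm (cot θ)]
    calc |ε - 1| / (2 * m) * |θ⁻¹ - cot θ| ≤ 2 / (2 * m) * 2 := by
          gcongr; exact abs_inv_sub_cot_le_two hθ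
      _ = 2 / m := by field_simp
  rw [gammaM_eq_im_geom_sum, hsplit]
  calc _ ≤ π / 2 / m + 2 / m := (abs_add_le _ _).trans (add_le_add hE hC)
    _ ≤ 4 / m := by rw [← add_div]; gcongr; linarith [pi_le_four]

theorem gamma_m_parity_asymp :
    ∃ K : ℝ, 0 < K ∧
      ∀ (m : ℕ), 2 ≤ m → ∀ (h : ℤ), h ≠ 0 →
        -(m : ℝ) / 2 < (h : ℝ) → (h : ℝ) ≤ (m : ℝ) / 2 →
        (Even h →
          |(-(1 / (m : ℝ))) *
              (∑ n ∈ Finset.range (m / 2 + 1),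
                Complex.exp (2 * (π : ℂ) * Complex.I * (n : ℂ) * (h : ℂ) / (m : ℂ))).im| ≤
            K / m) ∧
        (Odd h →
          |(-(1 / (m : ℝ))) *
              (∑ n ∈ Finset.range (m / 2 + 1),
                Complex.exp (2 * (π : ℂ) * Complex.I * (n : ℂ) * (h : ℂ) / (m : ℂ))).im
            + 1 / (π * (h : ℝ))| ≤ K / m) := by
  refine ⟨4, by norm_num, fun m _ h h0 hlo hhi => ?_⟩
  have hgamma := abs_gammaM_sub_le h0 (abs_le.2 ⟨by linarith, hhi⟩)
  refine ⟨fun he => ?_, fun ho => ?_⟩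
  · rwa [he.neg_one_zpow, sub_self, zero_div, sub_zero] at hgamma
  · rwa [ho.neg_one_zpow, show ((-1 : ℝ) - 1) / (2 * π * h) = -(1 / (π * h)) by field_simp; ring,
      sub_neg_eq_add] at hgamma
end

section
/- Let m be a large integer, J = (−m/2, m/2] ∩ ℤ ∖ {0}, and (ε_h)_{h∈J} ∈ {−1,1}^J with ε_h = 1 for h ≥ 1 and ε_h = −1 for h ≤ −1 (h < 0). Define φ(n) = (1/√m)·∑_{h∈J} ε_h·e(−nh/m). Then |∑_{0≤n≤m/2} φ(n)| = (√m/π)·log m + O(√m). -/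
/-!
Pairing `h` with `-h` turns `√m φ(n)` into `-2i ∑_{1 ≤ h ≤ (m-1)/2} sin (2πnh/m)` plus at most
one unimodular term (`h = m/2`). With `ψ = πn/m` the sine sum telescopes to
`(cos ψ - cos ((2B+1)ψ)) / (2 sin ψ)` with `B = ⌊(m-1)/2⌋`, and since `(2B+1)ψ` lies within
`ψ` of `nπ` this is `(1 - (-1)^n) / (2ψ) + O(1)` uniformly in `1 ≤ n ≤ m/2`. Summing over `n` leaves
`(2m/π) ∑_{k < K} 1/(2k+1) = (m/π) log m + O(m)` with `K ≈ m/4`, and dividing by `√m` gives the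
claim.
-/

open Real Finset

theorem two_mul_sin_mul_sum_range_sin (x : ℝ) (H : ℕ) :
    2 * sin x * ∑ j ∈ range H, sin (2 * (j + 1) * x) = cos x - cos ((2 * H + 1) * x) := by
  induction H with
  | zero => simp
  | succ H ih =>
    have hstep : 2 * sin x * sin (2 * (H + 1) * x)
        = cos ((2 * H + 1) * x) - cos ((2 * (H + 1 : ℕ) + 1) * x) := by
      rw [cos_sub_cos]
      push_cast
      rw [show ((2 * H + 1) * x + (2 * (H + 1) + 1) * x) / 2 = 2 * (H + 1) * x by ring,
        show ((2 * H + 1) * x - (2 * (H + 1) + 1) * x) / 2 = -x by ring, sin_neg]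
      ring
    rw [sum_range_succ, mul_add, ih]
    push_cast at hstep ⊢
    linarith

theorem abs_div_sin_sub_div_le {x c d : ℝ} (hx : 0 < x) (hxπ : x ≤ π / 2)
    (hcd : |c - d| ≤ x ^ 2) (hd : |d| ≤ 2) : |c / sin x - d / x| ≤ 5 := by
  have hsin_lb : 2 / π * x ≤ sin x := mul_le_sin hx.le hxπ
  have hsin : 0 < sin x := lt_of_lt_of_le (by positivity) hsin_lb
  have hgap : 0 ≤ x - sin x := by linarith [sin_lt hx]
  calc |c / sin x - d / x| = |(c - d) / sin x + d * ((x - sin x) / (x * sin x))| := by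
        congr 1; field_simp; ring
    _ ≤ |c - d| / sin x + |d| * ((x - sin x) / (x * sin x)) := by
        grw [abs_add_le, abs_div, abs_mul, abs_of_pos hsin,
          abs_of_nonneg (div_nonneg hgap (by positivity))]
    _ ≤ x ^ 2 / (2 / π * x) + 2 * (x ^ 3 / 6 / (x * (2 / π * x))) := by
        gcongr
        linarith [sin_gt_sub_cube hx]
    _ = 2 * π * x / 3 := by field_simp; ring
    _ ≤ 5 := by nlinarith [pi_lt_d2, pi_pos]

theorem abs_two_mul_sum_range_sin_sub_le {ψ : ℝ} {n B : ℕ} (hψ : 0 < ψ) (hψπ : ψ ≤ π / 2)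
    (hlo : n * π - ψ ≤ (2 * B + 1) * ψ) (hhi : (2 * B + 1) * ψ ≤ n * π) :
    |2 * ∑ j ∈ range B, sin (2 * (j + 1) * ψ) - (1 - (-1) ^ n) / ψ| ≤ 5 := by
  have hsin : 0 < sin ψ := sin_pos_of_pos_of_lt_pi hψ (by linarith [pi_pos])
  set t := n * π - (2 * B + 1) * ψ with ht
  have htel : 2 * ∑ j ∈ range B, sin (2 * (j + 1) * ψ) = (cos ψ - (-1) ^ n * cos t) / sin ψ := by
    rw [eq_div_iff hsin.ne', ← cos_nat_mul_pi_sub, ht, sub_sub_cancel,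
      ← two_mul_sin_mul_sum_range_sin]
    ring
  rw [htel]
  apply abs_div_sin_sub_div_le hψ hψπ
  · calc |cos ψ - (-1) ^ n * cos t - (1 - (-1) ^ n)|
          = |(cos ψ - 1) - (-1) ^ n * (cos t - 1)| := by congr 1; ring
      _ ≤ |cos ψ - 1| + |(-1) ^ n * (cos t - 1)| := abs_sub _ _
      _ = (1 - cos ψ) + (1 - cos t) := by
          rw [abs_mul, abs_neg_one_pow, one_mul, abs_of_nonpos (by linarith [cos_le_one ψ]),
            abs_of_nonpos (by linarith [cos_le_one t])]
          ring
      _ ≤ ψ ^ 2 := by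
          nlinarith [one_sub_sq_div_two_le_cos (x := ψ), one_sub_sq_div_two_le_cos (x := t)]
  · rcases neg_one_pow_eq_or ℝ n with h | h <;> rw [h] <;> norm_num

theorem sum_range_one_sub_neg_one_pow_mul {R : Type*} [CommRing R] (g : ℕ → R) (M : ℕ) :
    ∑ n ∈ range M, (1 - (-1) ^ n) * g n = 2 * ∑ k ∈ range (M / 2), g (2 * k + 1) := by
  induction M with
  | zero => simp
  | succ M ih =>
    rw [sum_range_succ, ih]
    rcases Nat.even_or_odd' M with ⟨k, rfl | rfl⟩
    · rw [show (2 * k + 1) / 2 = 2 * k / 2 by omega, (even_two_mul k).neg_one_pow]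
      ring
    · rw [show (2 * k + 1 + 1) / 2 = (2 * k + 1) / 2 + 1 by omega, sum_range_succ,
        show (2 * k + 1) / 2 = k by omega, (odd_two_mul_add_one k).neg_one_pow]
      ring

theorem sum_range_inv_two_mul_add_one (K : ℕ) :
    ∑ k ∈ range K, ((2 * k + 1 : ℝ))⁻¹ = harmonic (2 * K) - (harmonic K : ℝ) / 2 := by
  induction K with
  | zero => simp
  | succ K ih =>
    rw [sum_range_succ, ih, show 2 * (K + 1) = 2 * K + 1 + 1 by ring, harmonic_succ,
      harmonic_succ, harmonic_succ]
    push_cast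
    field_simp
    ring

theorem abs_sum_range_inv_two_mul_add_one_sub_log_le (K : ℕ) :
    |∑ k ∈ range K, ((2 * k + 1 : ℝ))⁻¹ - log K / 2| ≤ 2 := by
  rcases Nat.eq_zero_or_pos K with rfl | hK
  · simp
  have hK' : (0 : ℝ) < K := by exact_mod_cast hK
  have h2K := log_add_one_le_harmonic (2 * K)
  have h2K' := harmonic_le_one_add_log (2 * K)
  have hK1 := log_add_one_le_harmonic K
  have hK1' := harmonic_le_one_add_log K
  push_cast at h2K h2K' hK1 hK1'
  have hlog2K : log (2 * K) = log 2 + log K := log_mul two_ne_zero hK'.ne'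
  have hmono : log (2 * K) ≤ log (2 * K + 1) := log_le_log (by positivity) (by linarith)
  have hmono' : log K ≤ log (K + 1) := log_le_log hK' (by linarith)
  have hlog2 := log_two_lt_d9
  have hlog2' := log_two_gt_d9
  rw [sum_range_inv_two_mul_add_one, abs_le]
  constructor <;> linarith

/-- The index set `J = (-m/2, m/2] ∩ ℤ ∖ {0}`. -/
noncomputable def nonzeroCenteredResidues (m : ℕ) : Finset ℤ :=
  (Icc (-(m : ℤ)) m).filter
    (fun h : ℤ => -(m : ℝ) / 2 < (h : ℝ) ∧ (h : ℝ) ≤ (m : ℝ) / 2 ∧ h ≠ 0)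

theorem nonzeroCenteredResidues_eq (m : ℕ) :
    nonzeroCenteredResidues m =
      (range (m / 2)).image (fun j : ℕ => (j : ℤ) + 1) ∪
        (range ((m - 1) / 2)).image (fun j : ℕ => -((j : ℤ) + 1)) := by
  ext h
  have hlo : -(m : ℝ) / 2 < h ↔ -(m : ℤ) < 2 * h := by
    rw [div_lt_iff₀ two_pos, ← Int.cast_lt (R := ℝ)]
    push_cast
    constructor <;> intro <;> linarith
  have hhi : (h : ℝ) ≤ (m : ℝ) / 2 ↔ 2 * h ≤ m := by
    rw [le_div_iff₀ two_pos, ← Int.cast_le (R := ℝ)]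
    push_cast
    constructor <;> intro <;> linarith
  simp only [nonzeroCenteredResidues, mem_filter, mem_Icc, mem_union, mem_image, mem_range,
    hlo, hhi]
  constructor
  · intro hh
    rcases lt_or_gt_of_ne hh.2.2.2 with hneg | hpos
    · exact Or.inr ⟨(-h - 1).toNat, by omega, by omega⟩
    · exact Or.inl ⟨(h - 1).toNat, by omega, by omega⟩
  · rintro (⟨j, hj, rfl⟩ | ⟨j, hj, rfl⟩) <;> omega

theorem sum_nonzeroCenteredResidues {M : Type*} [AddCommMonoid M] (m : ℕ) (f : ℤ → M) :
    ∑ h ∈ nonzeroCenteredResidues m, f h =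
      ∑ j ∈ range (m / 2), f (j + 1) + ∑ j ∈ range ((m - 1) / 2), f (-(j + 1)) := by
  rw [nonzeroCenteredResidues_eq, sum_union, sum_image, sum_image]
  · exact fun a _ b _ h => by simpa using h
  · exact fun a _ b _ h => by simpa using h
  · simp only [disjoint_left, mem_image, mem_range]
    rintro _ ⟨i, -, rfl⟩ ⟨j, -, h⟩
    omega

theorem norm_sum_sign_mul_exp_add_two_mul_I_mul_sum_sin_le (m n : ℕ) :
    ‖∑ h ∈ nonzeroCenteredResidues m, (if 0 < h then (1 : ℂ) else -1) *
        Complex.exp (-(2 * (π : ℂ) * Complex.I * (n : ℂ) * (h : ℂ) / (m : ℂ))) +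
      2 * Complex.I * ∑ j ∈ range ((m - 1) / 2), (sin (2 * (j + 1) * (π * n / m)) : ℂ)‖ ≤ 1 := by
  set x : ℕ → ℝ := fun j => 2 * (j + 1) * (π * n / m)
  have hpos : ∀ j : ℕ, (if (0 : ℤ) < (j : ℤ) + 1 then (1 : ℂ) else -1) *
      Complex.exp (-(2 * (π : ℂ) * Complex.I * (n : ℂ) * (((j : ℤ) + 1 : ℤ) : ℂ) / (m : ℂ))) =
      Complex.exp ((-x j : ℝ) * Complex.I) := by
    intro j
    rw [if_pos (by positivity), one_mul]
    simp only [x]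
    push_cast
    ring_nf
  have hneg : ∀ j : ℕ, (if (0 : ℤ) < -((j : ℤ) + 1) then (1 : ℂ) else -1) *
      Complex.exp (-(2 * (π : ℂ) * Complex.I * (n : ℂ) * ((-((j : ℤ) + 1) : ℤ) : ℂ) / (m : ℂ))) =
      -Complex.exp ((x j : ℝ) * Complex.I) := by
    intro j
    rw [if_neg (by omega), neg_one_mul]
    simp only [x]
    push_cast
    ring_nf
  have hpair : ∀ j : ℕ, Complex.exp ((-x j : ℝ) * Complex.I) - Complex.exp ((x j : ℝ) * Complex.I)
      + 2 * Complex.I * (sin (x j) : ℂ) = 0 := by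
    intro j
    rw [Complex.ofReal_sin, mul_assoc, mul_left_comm, Complex.two_sin, Complex.ofReal_neg]
    linear_combination (Complex.exp (-(x j : ℂ) * Complex.I) - Complex.exp ((x j : ℂ) * Complex.I))
      * Complex.I_sq
  rw [sum_nonzeroCenteredResidues, ← sum_range_add_sum_Ico _ (show (m - 1) / 2 ≤ m / 2 by omega)]
  simp only [hpos, hneg]
  have hcancel := sum_eq_zero (s := range ((m - 1) / 2)) (fun j _ => hpair j)
  rw [sum_add_distrib, sum_sub_distrib, ← mul_sum] at hcancel
  -- only the unpaired index `h = m / 2`, present iff `m` is even, survives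
  calc _ = ‖∑ j ∈ Ico ((m - 1) / 2) (m / 2), Complex.exp ((-x j : ℝ) * Complex.I)‖ := by
        congr 1
        rw [sum_neg_distrib]
        linear_combination hcancel
    _ ≤ ∑ j ∈ Ico ((m - 1) / 2) (m / 2), 1 :=
        norm_sum_le_of_le _ fun j _ => (Complex.norm_exp_ofReal_mul_I _).le
    _ ≤ 1 := by
        rw [sum_const, Nat.card_Ico, nsmul_eq_mul, mul_one]
        norm_cast
        omega

theorem abs_sum_range_one_sub_neg_one_pow_div_sub_log_le (m : ℕ) (hm : 2 ≤ m) :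
    |∑ n ∈ range (m / 2 + 1), (1 - (-1) ^ n) / (π * n / m) - m / π * log m| ≤ 3 * m := by
  have hm0 : (0 : ℝ) < m := by positivity
  set K := (m / 2 + 1) / 2
  have hK0 : (0 : ℝ) < K := by exact_mod_cast (by omega : 0 < K)
  have hmain : ∑ n ∈ range (m / 2 + 1), (1 - (-1) ^ n) / (π * n / m) =
      2 * (m / π) * ∑ k ∈ range K, ((2 * k + 1 : ℝ))⁻¹ := by
    simp only [div_eq_mul_inv _ (π * _ / _), sum_range_one_sub_neg_one_pow_mul, mul_sum]
    refine sum_congr rfl fun k _ => ?_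
    push_cast
    field_simp
  have hlogK : |log K - log m| ≤ 4 := by
    have hKm : (K : ℝ) ≤ m := by exact_mod_cast (by omega : K ≤ m)
    have hmK : (m : ℝ) / K ≤ 5 :=
      (div_le_iff₀ hK0).mpr (by exact_mod_cast (by omega : m ≤ 5 * K))
    have hratio := log_le_sub_one_of_pos (div_pos hm0 hK0)
    rw [log_div hm0.ne' hK0.ne'] at hratio
    rw [abs_sub_comm, abs_of_nonneg (sub_nonneg.mpr (log_le_log hK0 hKm))]
    linarith
  rw [hmain, show 2 * (m / π) * ∑ k ∈ range K, ((2 * k + 1 : ℝ))⁻¹ - m / π * log m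
      = 2 * (m / π) * ((∑ k ∈ range K, ((2 * k + 1 : ℝ))⁻¹ - log K / 2)
        + (log K - log m) / 2) by ring, abs_mul, abs_of_pos (by positivity)]
  grw [abs_add_le, abs_div, abs_sum_range_inv_two_mul_add_one_sub_log_le, abs_two, hlogK]
  rw [show 2 * (m / π) * (2 + 4 / 2) = 8 * m / π by ring, div_le_iff₀ pi_pos]
  nlinarith [pi_gt_three]

theorem abs_two_mul_sum_sum_sin_sub_log_le (m : ℕ) (hm : 2 ≤ m) :
    |2 * ∑ n ∈ range (m / 2 + 1), ∑ j ∈ range ((m - 1) / 2), sin (2 * (j + 1) * (π * n / m))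
      - m / π * log m| ≤ 8 * m := by
  have hm0 : (0 : ℝ) < m := by positivity
  set B := (m - 1) / 2
  have hB : (m : ℝ) - 1 ≤ 2 * B + 1 ∧ (2 * B + 1 : ℝ) ≤ m := by
    constructor
    · rw [sub_le_iff_le_add]; exact_mod_cast (by omega : m ≤ 2 * B + 1 + 1)
    · exact_mod_cast (by omega : 2 * B + 1 ≤ m)
  have hterm : ∀ n ∈ range (m / 2 + 1),
      |2 * ∑ j ∈ range B, sin (2 * (j + 1) * (π * n / m)) - (1 - (-1) ^ n) / (π * n / m)| ≤ 5 := by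
    intro n hn
    rcases Nat.eq_zero_or_pos n with rfl | hn0
    · simp -- both terms vanish, the second as `0 / 0`
    have hn : (2 * n : ℝ) ≤ m := by
      rw [mem_range] at hn; exact_mod_cast (by omega : 2 * n ≤ m)
    have hψ : 0 < π * n / m := by positivity
    have hshift : (2 * B + 1) * (π * n / m) = n * π - (m - (2 * B + 1)) * (π * n / m) := by
      field_simp; ring
    apply abs_two_mul_sum_range_sin_sub_le hψ
    · rw [div_le_div_iff₀ hm0 two_pos]; nlinarith [pi_pos]
    · rw [hshift]; nlinarith
    · rw [hshift]; nlinarith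
  have hcompare : |2 * ∑ n ∈ range (m / 2 + 1), ∑ j ∈ range B, sin (2 * (j + 1) * (π * n / m))
      - ∑ n ∈ range (m / 2 + 1), (1 - (-1) ^ n) / (π * n / m)| ≤ 5 * m := by
    rw [mul_sum, ← sum_sub_distrib]
    grw [abs_sum_le_sum_abs, sum_le_sum hterm, sum_const, card_range, nsmul_eq_mul]
    rw [mul_comm]
    gcongr
    exact_mod_cast (by omega : m / 2 + 1 ≤ m)
  grw [abs_sub_le _ (∑ n ∈ range (m / 2 + 1), (1 - (-1) ^ n) / (π * n / m)), hcompare,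
    abs_sum_range_one_sub_neg_one_pow_div_sub_log_le m hm]
  linarith

theorem abs_norm_sub_le_norm_add_two_mul_I_mul_add_abs (U : ℂ) (S : ℝ) {L : ℝ} (hL : 0 ≤ L) :
    |‖U‖ - L| ≤ ‖U + 2 * Complex.I * S‖ + |2 * S - L| :=
  calc |‖U‖ - L| = |‖U‖ - ‖-((L : ℂ) * Complex.I)‖| := by
        rw [norm_neg, norm_mul, Complex.norm_I, Complex.norm_real, norm_of_nonneg hL, mul_one]
    _ ≤ ‖U - -((L : ℂ) * Complex.I)‖ := abs_norm_sub_norm_le _ _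
    _ = ‖(U + 2 * Complex.I * S) - ((2 * S - L : ℝ) : ℂ) * Complex.I‖ := by
        congr 1
        push_cast
        ring
    _ ≤ ‖U + 2 * Complex.I * S‖ + |2 * S - L| := by
        grw [norm_sub_le, norm_mul, Complex.norm_I, mul_one, Complex.norm_real, Real.norm_eq_abs]

theorem large_partial_sum_example :
    ∃ K : ℝ, 0 < K ∧
      ∀ (m : ℕ), 2 ≤ m →
        |norm
            (∑ n ∈ Finset.range (m / 2 + 1),
              ((Real.sqrt m : ℝ) : ℂ)⁻¹ *
                ∑ h ∈ ((Finset.Icc (-(m : ℤ)) m).filter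
                    (fun h : ℤ => -(m : ℝ) / 2 < (h : ℝ) ∧ (h : ℝ) ≤ (m : ℝ) / 2 ∧ h ≠ 0)),
                  (if 0 < h then (1 : ℂ) else -1) *
                    Complex.exp (-(2 * (π : ℂ) * Complex.I * (n : ℂ) * (h : ℂ) / (m : ℂ)))) -
          Real.sqrt m / π * Real.log m| ≤ K * Real.sqrt m := by
  refine ⟨9, by norm_num, fun m hm => ?_⟩
  rw [← mul_sum, ← nonzeroCenteredResidues]
  set U := ∑ n ∈ range (m / 2 + 1), ∑ h ∈ nonzeroCenteredResidues m,
    (if 0 < h then (1 : ℂ) else -1) *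
      Complex.exp (-(2 * (π : ℂ) * Complex.I * (n : ℂ) * (h : ℂ) / (m : ℂ)))
  set S := ∑ n ∈ range (m / 2 + 1), ∑ j ∈ range ((m - 1) / 2), sin (2 * (j + 1) * (π * n / m))
  set L := m / π * log m
  have hm0 : (0 : ℝ) < m := by positivity
  have hL : 0 ≤ L := mul_nonneg (by positivity) (log_nonneg (by exact_mod_cast (by omega : 1 ≤ m)))
  have hUS : ‖U + 2 * Complex.I * S‖ ≤ m := by
    simp only [S, U, Complex.ofReal_sum]
    rw [mul_sum, ← sum_add_distrib]
    grw [norm_sum_le_of_le _ fun n _ => norm_sum_sign_mul_exp_add_two_mul_I_mul_sum_sin_le m n]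
    rw [sum_const, card_range, nsmul_eq_mul, mul_one]
    exact_mod_cast (by omega : m / 2 + 1 ≤ m)
  have hUL : |‖U‖ - L| ≤ 9 * m := by
    grw [abs_norm_sub_le_norm_add_two_mul_I_mul_add_abs U S hL, hUS,
      abs_two_mul_sum_sum_sin_sub_log_le m hm]
    linarith
  have hsqrt : 0 < √(m : ℝ) := sqrt_pos.mpr hm0
  have hsq : √(m : ℝ) * √(m : ℝ) = m := mul_self_sqrt hm0.le
  have hL' : L = √(m : ℝ) * (√(m : ℝ) / π * log m) := by
    simp only [L]; rw [← mul_assoc, ← mul_div_assoc, hsq]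
  calc _ = |(√(m : ℝ))⁻¹ * (‖U‖ - L)| := by
        rw [norm_mul, norm_inv, Complex.norm_real, norm_of_nonneg hsqrt.le, hL']
        field_simp
    _ = (√(m : ℝ))⁻¹ * |‖U‖ - L| := by rw [abs_mul, abs_of_pos (inv_pos.mpr hsqrt)]
    _ ≤ (√(m : ℝ))⁻¹ * (9 * m) := by gcongr
    _ = 9 * √(m : ℝ) := by rw [inv_mul_eq_div, div_eq_iff hsqrt.ne', mul_assoc, hsq]
end
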